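/- arXiv:0906.3750 — 11 statements merged into one kernel-verified Lean document; each statement's English description precedes it below -/
import Mathlib

section
/- Let G be a Hausdorff topological group, Γ a group, S a finite type, and ι : S → Γ a map whose range generates Γ (the subgroup closure of the range of ι is all of Γ). Equip the set Hom(Γ,G) of group homomorphisms with the topology induced by the inclusion into the product space Γ → G (topology of pointwise convergence), and equip S → G with the product topology. Then the restriction map Hom(Γ,G) → (S → G), ρ ↦ ρ ∘ ι, is a closed embedding: it is injective, a homeomorphism onto its image, and its image is closed in S → G. -/
/-!
Every `γ : Γ` is a word in the generators `ι s`, so evaluating that word in `f : S → G` gives a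
continuous map `W : (S → G) → (Γ → G)` that reconstructs `ρ` from `ρ ∘ ι`. Hence the restriction
map has a continuous left inverse on the (closed) set of homomorphisms in `Γ → G`, and its image
is cut out by the closed conditions "`W f` is a homomorphism" and "`W f ∘ ι = f`".
-/

open Topology

theorem Topology.IsClosedEmbedding.comp_of_continuous_leftInverse {X Y Z : Type*}
    [TopologicalSpace X] [TopologicalSpace Y] [TopologicalSpace Z] [T2Space Z]
    {e : X → Y} {p : Y → Z} {s : Z → Y} (he : IsClosedEmbedding e) (hp : Continuous p)
    (hs : Continuous s) (hspe : ∀ x, s (p (e x)) = e x) : IsClosedEmbedding (p ∘ e) := by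
  have hinj : Function.Injective (p ∘ e) := fun x y hxy =>
    he.injective (by rw [← hspe x, ← hspe y]; exact congrArg s hxy)
  have hrange : Set.range (p ∘ e) = s ⁻¹' Set.range e ∩ {z | p (s z) = z} := by
    ext z
    constructor
    · rintro ⟨x, rfl⟩
      exact ⟨⟨x, (hspe x).symm⟩, congrArg p (hspe x)⟩
    · rintro ⟨⟨x, hx⟩, hz⟩
      exact ⟨x, (congrArg p hx).trans hz⟩
  have hind : IsInducing (p ∘ e) := IsInducing.of_comp (hp.comp he.continuous) hs
    (by rw [show s ∘ p ∘ e = e from funext hspe]; exact he.isInducing)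
  refine ⟨⟨hind, hinj⟩, ?_⟩
  rw [hrange]
  exact (he.isClosed_range.preimage hs).inter (isClosed_eq (hp.comp hs) continuous_id)

section Restriction

variable {G : Type*} [Group G] [TopologicalSpace G] [ContinuousMul G] [ContinuousInv G]
  {Γ : Type*} [Group Γ] {S : Type*} (ι : S → Γ)

theorem exists_continuous_eval_comp_of_mem_closure {γ : Γ}
    (hγ : γ ∈ Subgroup.closure (Set.range ι)) :
    ∃ w : (S → G) → G, Continuous w ∧ ∀ ρ : Γ →* G, w (ρ ∘ ι) = ρ γ := by
  induction hγ using Subgroup.closure_induction with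
  | mem x hx =>
    obtain ⟨s, rfl⟩ := hx
    exact ⟨fun f => f s, continuous_apply s, fun ρ => rfl⟩
  | one => exact ⟨fun _ => 1, continuous_const, fun ρ => (map_one ρ).symm⟩
  | mul x y _ _ hx hy =>
    obtain ⟨wx, hwx, hx⟩ := hx
    obtain ⟨wy, hwy, hy⟩ := hy
    exact ⟨fun f => wx f * wy f, hwx.mul hwy, fun ρ =>
      (congrArg₂ (· * ·) (hx ρ) (hy ρ)).trans (map_mul ρ x y).symm⟩
  | inv x _ hx =>
    obtain ⟨wx, hwx, hx⟩ := hx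
    exact ⟨fun f => (wx f)⁻¹, hwx.inv, fun ρ => (congrArg _ (hx ρ)).trans (map_inv ρ x).symm⟩

theorem exists_continuous_leftInverse_comp_of_closure_eq_top
    (hgen : Subgroup.closure (Set.range ι) = ⊤) :
    ∃ W : (S → G) → Γ → G, Continuous W ∧ ∀ ρ : Γ →* G, W (ρ ∘ ι) = ρ := by
  choose w hwc hw using fun γ =>
    exists_continuous_eval_comp_of_mem_closure (G := G) ι (hgen ▸ Subgroup.mem_top γ)
  exact ⟨fun f γ => w γ f, continuous_pi hwc, fun ρ => funext fun γ => hw γ ρ⟩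

end Restriction

theorem stmt0_general {G : Type*} [Group G] [TopologicalSpace G] [IsTopologicalGroup G] [T2Space G]
    {Γ : Type*} [Group Γ] {S : Type*} (ι : S → Γ)
    (hgen : Subgroup.closure (Set.range ι) = ⊤) :
    letI : TopologicalSpace (Γ →* G) :=
      TopologicalSpace.induced (fun ρ : Γ →* G => (fun γ => ρ γ : Γ → G)) inferInstance
    Function.Injective (fun (ρ : Γ →* G) (s : S) => ρ (ι s)) ∧
      IsClosedEmbedding (fun (ρ : Γ →* G) (s : S) => ρ (ι s)) := by
  let _ : TopologicalSpace (Γ →* G) :=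
    TopologicalSpace.induced (fun ρ : Γ →* G => (fun γ => ρ γ : Γ → G)) inferInstance
  have hcoe : IsClosedEmbedding (fun ρ : Γ →* G => (fun γ => ρ γ : Γ → G)) :=
    ⟨⟨⟨rfl⟩, DFunLike.coe_injective⟩, MonoidHom.isClosed_range_coe Γ G⟩
  obtain ⟨W, hWc, hW⟩ := exists_continuous_leftInverse_comp_of_closure_eq_top (G := G) ι hgen
  have h := hcoe.comp_of_continuous_leftInverse (p := fun f s => f (ι s))
      (continuous_pi fun s => continuous_apply (ι s)) hWc hW
  exact ⟨h.injective, h⟩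

/-- For a Hausdorff topological group `G`, a group `Γ` generated by the range of
`ι : S → Γ` with `S` finite, the restriction map `Hom(Γ,G) → (S → G)`, `ρ ↦ ρ ∘ ι`, is a
closed embedding (for the topology of pointwise convergence on `Hom(Γ,G)` and the product
topology on `S → G`): it is injective, a homeomorphism onto its image, and its image is
closed. -/
theorem stmt0 {G : Type*} [Group G] [TopologicalSpace G] [IsTopologicalGroup G] [T2Space G]
    {Γ : Type*} [Group Γ] {S : Type*} [Finite S] (ι : S → Γ)
    (hgen : Subgroup.closure (Set.range ι) = ⊤) :
    letI : TopologicalSpace (Γ →* G) :=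
      TopologicalSpace.induced (fun ρ : Γ →* G => (fun γ => ρ γ : Γ → G)) inferInstance
    Function.Injective (fun (ρ : Γ →* G) (s : S) => ρ (ι s)) ∧
      IsClosedEmbedding (fun (ρ : Γ →* G) (s : S) => ρ (ι s)) :=
  stmt0_general ι hgen
end

section
/- Assume moreover that the action of G on X is cocompact, i.e. there is a compact set C ⊆ X such that every point of X lies in G·C. Let (f_k)_{k∈ℕ} be a sequence of tuples S → G such that the sequence (λ(f_k)) is bounded above. Then there exist a strictly increasing map φ : ℕ → ℕ, a sequence (g_k) in G, and a tuple f : S → G such that for every s ∈ S the sequence g_k · f_{φ(k)}(s) · g_k⁻¹ converges to f(s) in G, the set Min(f) is nonempty, and λ(f) = liminf_{k→∞} λ(f_k). -/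
open Filter Topology

/-- The displacement function of a tuple `f : S → G` at `x : X`. -/
noncomputable def dfun {X G S : Type*} [MetricSpace X] [SMul G X] [Fintype S]
    (f : S → G) (x : X) : ℝ :=
  Real.sqrt (∑ s : S, dist x (f s • x) ^ 2)

/-- The minimal displacement of a tuple `f : S → G` over the space `X`. -/
noncomputable def lam (X : Type*) {G S : Type*} [MetricSpace X] [SMul G X] [Fintype S]
    (f : S → G) : ℝ :=
  ⨅ x : X, dfun f x

/-!
A sequence of almost minimizers `x_k` of `d_{f_k}` can be moved into the compact set `C` by
elements `h_k`; conjugating `f_k` by `h_k` does not change displacements, and afterwards every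
`h_k⁻¹ f_k(s) h_k` moves a point of `C` by at most `sup_k λ(f_k) + 1`, so by properness the
conjugated tuples stay in a compact set. Extract a subsequence along which `λ(f_k)` tends to its
liminf and the conjugated tuples and the points of `C` converge. Since `(f, x) ↦ d_f(x)` is
continuous, the limit point realises the value `liminf λ(f_k)`, which is also a lower bound of the
limit displacement function.
-/

section Displacement

variable {X G S : Type*} [MetricSpace X] [Fintype S]

section SMul

variable [SMul G X]

lemma dfun_nonneg (f : S → G) (x : X) : 0 ≤ dfun f x := Real.sqrt_nonneg _

lemma dist_le_dfun (f : S → G) (x : X) (s : S) : dist x (f s • x) ≤ dfun f x :=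
  Real.le_sqrt_of_sq_le <|
    Finset.single_le_sum (f := fun s => dist x (f s • x) ^ 2) (fun _ _ => sq_nonneg _)
      (Finset.mem_univ s)

lemma lam_le_dfun (f : S → G) (x : X) : lam X f ≤ dfun f x :=
  ciInf_le ⟨0, by rintro _ ⟨y, rfl⟩; exact dfun_nonneg f y⟩ x

lemma lam_nonneg [Nonempty X] (f : S → G) : 0 ≤ lam X f :=
  le_ciInf fun x => dfun_nonneg f x

lemma le_lam_iff [Nonempty X] {f : S → G} {a : ℝ} : a ≤ lam X f ↔ ∀ x : X, a ≤ dfun f x :=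
  ⟨fun h x => h.trans (lam_le_dfun f x), le_ciInf⟩

lemma continuous_dfun [TopologicalSpace G] [ContinuousSMul G X] :
    Continuous fun p : (S → G) × X => dfun p.1 p.2 := by
  unfold dfun
  fun_prop

end SMul

section Conj

variable [Group G] [MulAction G X]

lemma dfun_conj (hiso : ∀ g : G, Isometry (fun x : X => g • x)) (f : S → G) (h : G) (x : X) :
    dfun (fun s => h⁻¹ * f s * h) x = dfun f (h • x) := by
  unfold dfun
  congr 1
  refine Finset.sum_congr rfl fun s _ => ?_
  rw [← (hiso h).dist_eq, mul_smul, mul_smul, smul_inv_smul]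

lemma lam_conj [Nonempty X] (hiso : ∀ g : G, Isometry (fun x : X => g • x))
    (f : S → G) (h : G) : lam X (fun s => h⁻¹ * f s * h) = lam X f := by
  refine le_antisymm (le_lam_iff.2 fun y => ?_) (le_lam_iff.2 fun y => ?_)
  · simpa only [dfun_conj hiso, smul_inv_smul] using lam_le_dfun (fun s => h⁻¹ * f s * h) (h⁻¹ • y)
  · simpa only [dfun_conj hiso] using lam_le_dfun f (h • y)

lemma exists_conj_dfun_lt_of_cocompact [Nonempty X]
    (hiso : ∀ g : G, Isometry (fun x : X => g • x)) {C : Set X}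
    (hC : ∀ x : X, ∃ g : G, ∃ c ∈ C, x = g • c) (f : S → G) {ε : ℝ} (hε : 0 < ε) :
    ∃ h : G, ∃ c ∈ C, dfun (fun s => h⁻¹ * f s * h) c < lam X f + ε := by
  obtain ⟨x, hx⟩ := exists_lt_of_ciInf_lt (lt_add_of_pos_right (lam X f) hε)
  obtain ⟨h, c, hcC, rfl⟩ := hC x
  exact ⟨h, c, hcC, by rwa [dfun_conj hiso]⟩

end Conj

end Displacement

lemma isCompact_setOf_exists_smul_mem {X G : Type*} [TopologicalSpace X] [TopologicalSpace G]
    [SMul G X] (hproper : IsProperMap (fun p : G × X => (p.2, p.1 • p.2)))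
    {C D : Set X} (hC : IsCompact C) (hD : IsCompact D) :
    IsCompact {g : G | ∃ c ∈ C, g • c ∈ D} := by
  convert (hproper.isCompact_preimage (hC.prod hD)).image continuous_fst using 1
  ext g
  simp [and_comm]

lemma exists_isCompact_of_dfun_le {X G S : Type*} [MetricSpace X] [ProperSpace X] [Fintype S]
    [TopologicalSpace G] [SMul G X] (hproper : IsProperMap (fun p : G × X => (p.2, p.1 • p.2)))
    {C : Set X} (hC : IsCompact C) (r : ℝ) :
    ∃ K : Set (S → G), IsCompact K ∧ ∀ f : S → G, ∀ c ∈ C, dfun f c ≤ r → f ∈ K := by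
  refine ⟨Set.univ.pi fun _ => {g : G | ∃ c ∈ C, g • c ∈ Metric.cthickening r C},
    isCompact_univ_pi fun _ => isCompact_setOf_exists_smul_mem hproper hC hC.cthickening,
    fun f c hc hf => Set.mem_univ_pi.2 fun s => ⟨c, hc, ?_⟩⟩
  refine Metric.mem_cthickening_of_dist_le _ c r C hc ?_
  rw [dist_comm]
  exact (dist_le_dfun f c s).trans hf

lemma dfun_eq_and_lam_eq_of_tendsto {X G S ι : Type*} [MetricSpace X] [Fintype S]
    [TopologicalSpace G] [SMul G X] [ContinuousSMul G X] {l : Filter ι} [l.NeBot]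
    {F : ι → S → G} {c : ι → X} {ε : ι → ℝ} {f : S → G} {x : X} {L : ℝ}
    (hF : Tendsto F l (𝓝 f)) (hc : Tendsto c l (𝓝 x))
    (hlam : Tendsto (fun i => lam X (F i)) l (𝓝 L)) (hε : Tendsto ε l (𝓝 0))
    (hd : ∀ i, dfun (F i) (c i) ≤ lam X (F i) + ε i) :
    dfun f x = L ∧ lam X f = L := by
  have : Nonempty X := ⟨x⟩
  have hcont : ∀ {y : ι → X} {z : X}, Tendsto y l (𝓝 z) →
      Tendsto (fun i => dfun (F i) (y i)) l (𝓝 (dfun f z)) := fun {_ z} hy =>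
    ((continuous_dfun.tendsto (f, z)).comp (hF.prodMk_nhds hy) :)
  have hx : dfun f x = L := by
    refine tendsto_nhds_unique (hcont hc) ?_
    refine tendsto_of_tendsto_of_tendsto_of_le_of_le hlam ?_ (fun i => lam_le_dfun _ _) hd
    simpa only [add_zero] using hlam.add hε
  have hL : L ≤ lam X f := le_lam_iff.2 fun y =>
    le_of_tendsto_of_tendsto' hlam (hcont tendsto_const_nhds) fun i => lam_le_dfun _ _
  exact ⟨hx, le_antisymm ((lam_le_dfun f x).trans hx.le) hL⟩

theorem stmt3_general {X G S : Type*} [MetricSpace X] [Nonempty X] [ProperSpace X]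
    [Group G] [TopologicalSpace G]
    [TopologicalSpace.MetrizableSpace G]
    [MulAction G X] [ContinuousSMul G X]
    (hiso : ∀ g : G, Isometry (fun x : X => g • x))
    (hproper : IsProperMap (fun p : G × X => (p.2, p.1 • p.2)))
    [Fintype S]
    (hcc : ∃ C : Set X, IsCompact C ∧ ∀ x : X, ∃ g : G, ∃ c ∈ C, x = g • c)
    (fseq : ℕ → S → G) (hbdd : ∃ B : ℝ, ∀ k : ℕ, lam X (fseq k) ≤ B) :
    ∃ (φ : ℕ → ℕ), StrictMono φ ∧
      ∃ (g : ℕ → G) (f : S → G),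
        (∀ s : S, Tendsto (fun k : ℕ => g k * fseq (φ k) s * (g k)⁻¹) atTop (nhds (f s))) ∧
        {x : X | dfun f x = lam X f}.Nonempty ∧
        lam X f = liminf (fun k : ℕ => lam X (fseq k)) atTop := by
  obtain ⟨C, hC, hCcov⟩ := hcc
  obtain ⟨B, hB⟩ := hbdd
  choose h c hcC hcmin using fun k : ℕ =>
    exists_conj_dfun_lt_of_cocompact hiso hCcov (fseq k) (Nat.one_div_pos_of_nat (n := k))
  set F : ℕ → S → G := fun k s => (h k)⁻¹ * fseq k s * h k
  have hlamF : ∀ k, lam X (F k) = lam X (fseq k) := fun k => lam_conj hiso _ _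
  obtain ⟨K, hK, hdfunK⟩ := exists_isCompact_of_dfun_le (S := S) hproper hC (B + 1)
  have hFK : ∀ k, F k ∈ K := fun k => hdfunK _ _ (hcC k) <| (hcmin k).le.trans <|
    add_le_add (hB k) (div_le_one_of_le₀ (by simp) (by positivity))
  obtain ⟨φ₁, hφ₁, hlim⟩ := (MapClusterPt.liminf (u := fun k => lam X (fseq k))
    (isBoundedUnder_of ⟨B, hB⟩).isCoboundedUnder_ge
    (isBoundedUnder_of ⟨0, fun k => lam_nonneg _⟩)).tendsto_subseq
  obtain ⟨⟨f, x⟩, -, φ₂, hφ₂, hconv⟩ := (hK.prod hC).tendsto_subseq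
    (x := fun k => (F (φ₁ k), c (φ₁ k))) fun k => ⟨hFK _, hcC _⟩
  have hφ : StrictMono (φ₁ ∘ φ₂) := hφ₁.comp hφ₂
  obtain ⟨hx, hf⟩ := dfun_eq_and_lam_eq_of_tendsto (F := fun k => F (φ₁ (φ₂ k)))
    (c := fun k => c (φ₁ (φ₂ k))) (ε := fun k => 1 / ((φ₁ (φ₂ k) : ℝ) + 1))
    hconv.fst_nhds hconv.snd_nhds
    (by simpa only [hlamF, Function.comp_def] using hlim.comp hφ₂.tendsto_atTop)
    (tendsto_one_div_add_atTop_nhds_zero_nat.comp hφ.tendsto_atTop)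
    fun k => (hlamF _).symm ▸ (hcmin _).le
  refine ⟨φ₁ ∘ φ₂, hφ, fun k => (h (φ₁ (φ₂ k)))⁻¹, f, fun s => ?_, ⟨x, hx.trans hf.symm⟩, hf⟩
  simp only [inv_inv]
  exact tendsto_pi_nhds.1 hconv.fst_nhds s

/-- Assume the action of `G` on `X` is cocompact. Given a sequence of tuples
`f_k : S → G` with `λ(f_k)` bounded above, there are a strictly increasing `φ : ℕ → ℕ`, a
sequence `(g_k)` in `G` and a tuple `f : S → G` such that `g_k · f_{φ(k)} · g_k⁻¹ → f`
pointwise, `Min(f)` is nonempty, and `λ(f) = liminf λ(f_k)`. -/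
theorem stmt3 {X G S : Type*} [MetricSpace X] [Nonempty X] [ProperSpace X]
    [Group G] [TopologicalSpace G] [IsTopologicalGroup G]
    [TopologicalSpace.MetrizableSpace G]
    [MulAction G X] [ContinuousSMul G X]
    (hiso : ∀ g : G, Isometry (fun x : X => g • x))
    (hproper : IsProperMap (fun p : G × X => (p.2, p.1 • p.2)))
    [Fintype S]
    (hcc : ∃ C : Set X, IsCompact C ∧ ∀ x : X, ∃ g : G, ∃ c ∈ C, x = g • c)
    (fseq : ℕ → S → G) (hbdd : ∃ B : ℝ, ∀ k : ℕ, lam X (fseq k) ≤ B) :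
    ∃ (φ : ℕ → ℕ), StrictMono φ ∧
      ∃ (g : ℕ → G) (f : S → G),
        (∀ s : S, Tendsto (fun k : ℕ => g k * fseq (φ k) s * (g k)⁻¹) atTop (nhds (f s))) ∧
        {x : X | dfun f x = lam X f}.Nonempty ∧
        lam X f = liminf (fun k : ℕ => lam X (fseq k)) atTop :=
  stmt3_general hiso hproper hcc fseq hbdd
end

section
/- Let S be a finite type and for each s ∈ S let f_s : ℝ → ℝ be a function that is convex on ℝ, nonnegative, and bounded above on [0, ∞). Suppose that for every t ∈ ℝ one has ∑_{s∈S} f_s(t)² ≥ ∑_{s∈S} f_s(0)² (the sum of squares attains its infimum over ℝ at 0). Then for every s ∈ S and every t ≥ 0 one has f_s(t) = f_s(0). -/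
open Set

theorem ConvexOn.antitoneOn_of_bddAbove {𝕜 : Type*} [Field 𝕜] [LinearOrder 𝕜]
    [IsStrictOrderedRing 𝕜] {g : 𝕜 → 𝕜} {a : 𝕜} (hg : ConvexOn 𝕜 (Ici a) g)
    (hbdd : BddAbove (g '' Ici a)) : AntitoneOn g (Ici a) := by
  intro x hx y hy hxy
  by_contra! hlt
  obtain ⟨M, hM⟩ := hbdd
  have hxy : x < y := hxy.lt_of_ne (ne_of_apply_ne g hlt.ne)
  set c := (g y - g x) / (y - x)
  have hc : 0 < c := div_pos (sub_pos.2 hlt) (sub_pos.2 hxy)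
  have hgyM : g y ≤ M := hM (mem_image_of_mem g hy)
  -- Convexity forces `g` to grow at least with slope `c` beyond `y`; follow it up past `M`.
  set t := y + (M - g y + 1) / c
  have hyt : y < t := lt_add_of_pos_right y (div_pos (by linarith) hc)
  have hslope : c ≤ (g t - g y) / (t - y) :=
    hg.slope_mono_adjacent hx (mem_Ici.2 (le_trans (mem_Ici.1 hy) hyt.le)) hxy hyt
  have hgt : M + 1 ≤ g t := by
    rw [le_div_iff₀ (sub_pos.2 hyt), show t - y = (M - g y + 1) / c by ring,
      mul_div_cancel₀ _ hc.ne'] at hslope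
    linarith
  have hgtM : g t ≤ M := hM (mem_image_of_mem g (le_trans (mem_Ici.1 hy) hyt.le))
  linarith

theorem eq_of_le_of_sum_sq_le {ι : Type*} [Fintype ι] {u v : ι → ℝ} (hu : ∀ i, 0 ≤ u i)
    (huv : ∀ i, u i ≤ v i) (hsum : ∑ i, v i ^ 2 ≤ ∑ i, u i ^ 2) (i : ι) : u i = v i := by
  have hsq : ∀ j ∈ Finset.univ, u j ^ 2 ≤ v j ^ 2 := fun j _ =>
    pow_le_pow_left₀ (hu j) (huv j) 2
  have hsq_eq := (Finset.sum_eq_sum_iff_of_le hsq).1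
    (le_antisymm (Finset.sum_le_sum hsq) hsum) i (Finset.mem_univ i)
  exact (pow_left_inj₀ (hu i) ((hu i).trans (huv i)) two_ne_zero).1 hsq_eq

/-- Let `S` be finite and, for each `s ∈ S`, let `f s : ℝ → ℝ` be convex on `ℝ`,
nonnegative, and bounded above on `[0, ∞)`. If the sum of squares `∑ s, (f s t)²` attains its
infimum over `ℝ` at `t = 0`, then every `f s` is constant on `[0, ∞)`: `f s t = f s 0` for all
`t ≥ 0`. -/
theorem stmt5 {S : Type*} [Fintype S] (f : S → ℝ → ℝ)
    (hconv : ∀ s : S, ConvexOn ℝ Set.univ (f s))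
    (hnonneg : ∀ s : S, ∀ t : ℝ, 0 ≤ f s t)
    (hbdd : ∀ s : S, ∃ M : ℝ, ∀ t : ℝ, 0 ≤ t → f s t ≤ M)
    (hmin : ∀ t : ℝ, ∑ s : S, f s 0 ^ 2 ≤ ∑ s : S, f s t ^ 2) :
    ∀ s : S, ∀ t : ℝ, 0 ≤ t → f s t = f s 0 := by
  intro s t ht
  have hanti : ∀ s', f s' t ≤ f s' 0 := by
    intro s'
    obtain ⟨M, hM⟩ := hbdd s'
    have hbdd' : BddAbove (f s' '' Ici 0) := ⟨M, forall_mem_image.2 fun x hx => hM x hx⟩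
    exact ((hconv s').subset (subset_univ _) (convex_Ici 0)).antitoneOn_of_bddAbove hbdd'
      self_mem_Ici ht ht
  exact eq_of_le_of_sum_sq_le (fun s' => hnonneg s' t) hanti (hmin t) s
end

section
/- Let K be a nontrivially normed field, n : ℕ, and b : Fin n → ℕ a block function. Let T be the set of triples (u, r, v) of n×n matrices over K such that u is strictly-lower block unipotent, r is block diagonal (r i j = 0 unless b i = b j) and invertible, and v is strictly-upper block unipotent, with the topology induced from M_n(K)³. Then the multiplication map T → M_n(K), (u, r, v) ↦ u·r·v, is an open embedding: it is injective, continuous, a homeomorphism onto its image, and its image is an open subset of M_n(K) consisting of invertible matrices. -/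
open Topology

/-- A matrix is block diagonal (w.r.t. the block function `b`) if its entries vanish off the
diagonal blocks. -/
def IsBlockDiag {K : Type*} [Zero K] {n : ℕ} (b : Fin n → ℕ)
    (M : Matrix (Fin n) (Fin n) K) : Prop :=
  ∀ i j, b i ≠ b j → M i j = 0

/-- A matrix is strictly-upper block unipotent if it is `1 + N` with `N` supported on the
entries `(i,j)` with `b i < b j`. -/
def IsStrictUpperUnip {K : Type*} [Zero K] [One K] [Add K] {n : ℕ} (b : Fin n → ℕ) (M : Matrix (Fin n) (Fin n) K) : Prop :=
  ∃ N : Matrix (Fin n) (Fin n) K, (∀ i j, ¬ b i < b j → N i j = 0) ∧ M = 1 + N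

/-- A matrix is strictly-lower block unipotent if it is `1 + N` with `N` supported on the
entries `(i,j)` with `b j < b i`. -/
def IsStrictLowerUnip {K : Type*} [Zero K] [One K] [Add K] {n : ℕ} (b : Fin n → ℕ) (M : Matrix (Fin n) (Fin n) K) : Prop :=
  ∃ N : Matrix (Fin n) (Fin n) K, (∀ i j, ¬ b j < b i → N i j = 0) ∧ M = 1 + N

/-!
Let `Ω = bigCell b` be the set of matrices `M` all of whose truncations `truncBlock b (b i) M`
(the leading principal block `{k | b k ≤ b i}` of `M`, completed by the identity) are
invertible; `Ω` is open. Truncation is multiplicative as soon as the left factor is block lower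
triangular, so every product `u * r * v` lies in `Ω`. Conversely, for `M ∈ Ω` let `G` be the matrix whose `j`-th
column is that of `(truncBlock b (b j) M)⁻¹`: it is block upper triangular, and `u := M * G` is
block lower unitriangular. The same construction on `Mᵀ` gives `v`, and `r := u⁻¹ * M * v⁻¹` is
block upper triangular (as `u⁻¹ * M = G⁻¹`) and block lower triangular, hence block diagonal.
These factors depend continuously on `M`, and they are unique because a block lower
unitriangular matrix which is block upper triangular is `1`. So multiplication is a
homeomorphism from the triples onto `Ω`.
-/

open Finset OrderDual

theorem ContinuousOn.matrix_inv {X m K : Type*} [TopologicalSpace X] [Fintype m] [DecidableEq m]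
    [Field K] [TopologicalSpace K] [IsTopologicalDivisionRing K] {f : X → Matrix m m K}
    {s : Set X} (hf : ContinuousOn f s) (h : ∀ x ∈ s, (f x).det ≠ 0) :
    ContinuousOn (fun x => (f x)⁻¹) s := fun x hx => by
  have : ContinuousAt Ring.inverse (f x).det := by
    rw [Ring.inverse_eq_inv']
    exact continuousAt_inv₀ (h x hx)
  exact (continuousAt_matrix_inv _ this).comp_continuousWithinAt (hf x hx)

namespace Matrix

variable {m α R : Type*} [DecidableEq m]

theorem mul_apply_of_row_eq_one [Fintype m] [NonAssocSemiring R] {A B : Matrix m m R} {i : m}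
    (h : ∀ k, A i k = (1 : Matrix m m R) i k) (j : m) : (A * B) i j = B i j := by
  rw [mul_apply', show A i = (1 : Matrix m m R) i from funext h, ← mul_apply', one_mul]

theorem mul_apply_of_col_eq_one [Fintype m] [NonAssocSemiring R] {A B : Matrix m m R} {j : m}
    (h : ∀ k, B k j = (1 : Matrix m m R) k j) (i : m) : (A * B) i j = A i j := by
  rw [mul_apply', show (fun k => B k j) = fun k => (1 : Matrix m m R) k j from funext h,
    ← mul_apply', mul_one]

/-- Block upper unitriangularity; `M.BlockUnitriangular (toDual ∘ b)` is block lower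
unitriangularity. -/
def BlockUnitriangular [Zero R] [One R] [LT α] (M : Matrix m m R) (b : m → α) : Prop :=
  ∀ ⦃i j⦄, ¬ b i < b j → M i j = (1 : Matrix m m R) i j

section LinearOrder

variable [LinearOrder α] {b : m → α}

section Semiring

variable [Semiring R] {A B M : Matrix m m R}

theorem BlockUnitriangular.blockTriangular (hM : M.BlockUnitriangular b) :
    M.BlockTriangular b := fun _ _ hij =>
  (hM (lt_asymm hij)).trans (one_apply_ne fun h => (h ▸ hij).false)

theorem blockUnitriangular_transpose_iff :
    Mᵀ.BlockUnitriangular (toDual ∘ b) ↔ M.BlockUnitriangular b := by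
  simp only [BlockUnitriangular, Function.comp_apply, toDual_lt_toDual, transpose_apply]
  refine forall_comm.trans (forall₂_congr fun i j => ?_)
  rw [← transpose_apply (1 : Matrix m m R), transpose_one]

theorem BlockUnitriangular.eq_one_of_blockTriangular (hM : M.BlockUnitriangular (toDual ∘ b))
    (hM' : M.BlockTriangular b) : M = 1 := by
  ext i j
  by_cases hij : b j < b i
  · rw [hM' hij, one_apply_ne fun h => (h ▸ hij).false]
  · exact hM (toDual_lt_toDual.not.2 hij)

theorem BlockUnitriangular.mul_apply_of_le [Fintype m] (hA : A.BlockUnitriangular b)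
    (hB : B.BlockTriangular b) {i j : m} (hji : b j ≤ b i) : (A * B) i j = B i j := by
  calc (A * B) i j = ((1 : Matrix m m R) * B) i j := by
        simp only [mul_apply]
        refine sum_congr rfl fun k _ => ?_
        by_cases hik : b i < b k
        · rw [hB (hji.trans_lt hik), mul_zero, mul_zero]
        · rw [hA hik]
    _ = B i j := by rw [one_mul]

theorem BlockUnitriangular.mul [Fintype m] (hA : A.BlockUnitriangular b)
    (hB : B.BlockUnitriangular b) : (A * B).BlockUnitriangular b := fun _ _ hij =>
  (hA.mul_apply_of_le hB.blockTriangular (not_lt.1 hij)).trans (hB hij)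

end Semiring

section CommRing

variable [Fintype m] [CommRing R] {M L₁ L₂ U₁ U₂ : Matrix m m R}

theorem BlockUnitriangular.det_eq_one (hM : M.BlockUnitriangular b) : M.det = 1 := by
  rw [hM.blockTriangular.det]
  refine prod_eq_one fun a _ => ?_
  have : M.toSquareBlock b a = 1 := by
    ext ⟨i, hi⟩ ⟨j, hj⟩
    rw [toSquareBlock_def, of_apply, hM (by rw [hi, hj]; exact lt_irrefl a)]
    simp [one_apply, Subtype.ext_iff]
  rw [this, det_one]

theorem BlockUnitriangular.isUnit (hM : M.BlockUnitriangular b) : IsUnit M :=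
  (isUnit_iff_isUnit_det M).2 (hM.det_eq_one ▸ isUnit_one)

theorem BlockUnitriangular.inv (hM : M.BlockUnitriangular b) : M⁻¹.BlockUnitriangular b := by
  have hdet : IsUnit M.det := (isUnit_iff_isUnit_det M).1 hM.isUnit
  have := M.invertibleOfIsUnitDet hdet
  intro i j hij
  rw [← hM.mul_apply_of_le (blockTriangular_inv_of_blockTriangular hM.blockTriangular)
    (not_lt.1 hij), mul_nonsing_inv M hdet]

theorem eq_of_mul_eq_mul_of_blockTriangular (hL₁ : L₁.BlockUnitriangular (toDual ∘ b))
    (hL₂ : L₂.BlockUnitriangular (toDual ∘ b)) (hU₁ : U₁.BlockTriangular b) (hU₁u : IsUnit U₁)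
    (hU₂ : U₂.BlockTriangular b) (h : L₁ * U₁ = L₂ * U₂) : L₁ = L₂ ∧ U₁ = U₂ := by
  have := hU₁u.invertible
  have := hL₂.isUnit.invertible
  have hL : L₂⁻¹ * L₁ = U₂ * U₁⁻¹ := by
    rw [inv_mul_eq_iff_eq_mul_of_invertible, ← Matrix.mul_assoc, ← h,
      mul_inv_cancel_right_of_invertible]
  obtain rfl : L₁ = L₂ := by
    rw [← mul_inv_cancel_left_of_invertible L₂ L₁, (hL₂.inv.mul hL₁).eq_one_of_blockTriangular
      (hL ▸ hU₂.mul (blockTriangular_inv_of_blockTriangular hU₁)), mul_one]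
  exact ⟨rfl, hL₁.isUnit.mul_right_inj.1 h⟩

end CommRing

def truncBlock [Zero R] [One R] (b : m → α) (t : α) (M : Matrix m m R) : Matrix m m R :=
  of fun i j => if b i ≤ t ∧ b j ≤ t then M i j else (1 : Matrix m m R) i j

section Truncation

variable {t : α}

theorem truncBlock_apply [Zero R] [One R] {M : Matrix m m R} {i j : m} :
    truncBlock b t M i j = if b i ≤ t ∧ b j ≤ t then M i j else (1 : Matrix m m R) i j :=
  rfl

theorem truncBlock_apply_of_not_le [Zero R] [One R] {M : Matrix m m R} {i j : m}
    (h : ¬(b i ≤ t ∧ b j ≤ t)) : truncBlock b t M i j = (1 : Matrix m m R) i j :=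
  if_neg h

theorem truncBlock_one [Zero R] [One R] : truncBlock b t (1 : Matrix m m R) = 1 := by
  ext i j
  rw [truncBlock_apply, ite_self]

theorem truncBlock_transpose [Zero R] [One R] {M : Matrix m m R} :
    truncBlock b t Mᵀ = (truncBlock b t M)ᵀ := by
  ext i j
  by_cases h : b i ≤ t ∧ b j ≤ t
  · rw [transpose_apply, truncBlock_apply, if_pos h, truncBlock_apply, if_pos h.symm]
    rfl
  · rw [transpose_apply, truncBlock_apply_of_not_le h, truncBlock_apply_of_not_le (mt And.symm h),
      ← transpose_apply (1 : Matrix m m R), transpose_one]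

theorem BlockUnitriangular.truncBlock [Zero R] [One R] {M : Matrix m m R} {c : m → α}
    (hM : M.BlockUnitriangular c) : (truncBlock b t M).BlockUnitriangular c := fun i j hij => by
  rw [truncBlock_apply]
  split_ifs
  exacts [hM hij, rfl]

theorem truncBlock_mul_of_blockTriangular [Fintype m] [Semiring R] {A B : Matrix m m R}
    (hA : A.BlockTriangular (toDual ∘ b)) :
    truncBlock b t (A * B) = truncBlock b t A * truncBlock b t B := by
  ext i j
  by_cases hi : b i ≤ t
  · by_cases hj : b j ≤ t
    · rw [truncBlock_apply, if_pos ⟨hi, hj⟩, mul_apply, mul_apply]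
      refine sum_congr rfl fun k _ => ?_
      by_cases hk : b k ≤ t
      · rw [truncBlock_apply, if_pos ⟨hi, hk⟩, truncBlock_apply, if_pos ⟨hk, hj⟩]
      · have hik : b i < b k := hi.trans_lt (not_le.1 hk)
        rw [hA (toDual_lt_toDual.2 hik), truncBlock_apply_of_not_le fun h => hk h.2,
          one_apply_ne fun h => (h ▸ hik).false, zero_mul, zero_mul]
    · rw [mul_apply_of_col_eq_one fun k => truncBlock_apply_of_not_le fun h => hj h.2,
        truncBlock_apply_of_not_le fun h => hj h.2, truncBlock_apply_of_not_le fun h => hj h.2]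
  · rw [mul_apply_of_row_eq_one fun k => truncBlock_apply_of_not_le fun h => hi h.1,
      truncBlock_apply_of_not_le fun h => hi h.1, truncBlock_apply_of_not_le fun h => hi h.1]

theorem inv_truncBlock_apply_of_not_le [Fintype m] [CommRing R] {M : Matrix m m R}
    (hM : IsUnit (truncBlock b t M).det) {i j : m} (h : ¬(b i ≤ t ∧ b j ≤ t)) :
    (truncBlock b t M)⁻¹ i j = (1 : Matrix m m R) i j := by
  by_cases hi : b i ≤ t
  · have hj : ¬b j ≤ t := fun hj => h ⟨hi, hj⟩
    rw [← mul_apply_of_col_eq_one (A := (truncBlock b t M)⁻¹) (B := truncBlock b t M)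
      (fun k => truncBlock_apply_of_not_le fun h => hj h.2), nonsing_inv_mul _ hM]
  · rw [← mul_apply_of_row_eq_one (A := truncBlock b t M) (B := (truncBlock b t M)⁻¹)
      (fun k => truncBlock_apply_of_not_le fun h => hi h.1), mul_nonsing_inv _ hM]

theorem isUnit_det_truncBlock_of_blockTriangular [Fintype m] [CommRing R] {L : Matrix m m R}
    (hL : L.BlockTriangular (toDual ∘ b)) (hLu : IsUnit L) : IsUnit (truncBlock b t L).det := by
  refine IsUnit.of_mul_eq_one (truncBlock b t L⁻¹).det ?_
  rw [← det_mul, ← truncBlock_mul_of_blockTriangular hL,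
    mul_nonsing_inv _ ((isUnit_iff_isUnit_det L).1 hLu), truncBlock_one, det_one]

theorem continuous_truncBlock [Zero R] [One R] [TopologicalSpace R] :
    Continuous (truncBlock b t : Matrix m m R → Matrix m m R) :=
  continuous_matrix fun i j => by
    simp only [truncBlock, of_apply]
    split_ifs <;> fun_prop

end Truncation

section BigCell

variable [Fintype m] [CommRing R]

variable (b) in
def bigCell : Set (Matrix m m R) :=
  {M | ∀ i, IsUnit (truncBlock b (b i) M).det}

variable (b) in
noncomputable def truncInvCols (M : Matrix m m R) : Matrix m m R :=
  of fun i j => (truncBlock b (b j) M)⁻¹ i j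

variable (b) in
noncomputable def lowerFactor (M : Matrix m m R) : Matrix m m R :=
  M * truncInvCols b M

variable (b) in
noncomputable def upperFactor (M : Matrix m m R) : Matrix m m R :=
  (lowerFactor b Mᵀ)ᵀ

variable (b) in
noncomputable def diagFactor (M : Matrix m m R) : Matrix m m R :=
  (lowerFactor b M)⁻¹ * M * (upperFactor b M)⁻¹

variable {L M V : Matrix m m R}

theorem mul_mem_bigCell (hL : L.BlockTriangular (toDual ∘ b)) (hLu : IsUnit L)
    (hV : V.BlockUnitriangular b) : L * V ∈ bigCell b := fun _ => by
  rw [truncBlock_mul_of_blockTriangular hL, det_mul, hV.truncBlock.det_eq_one, mul_one]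
  exact isUnit_det_truncBlock_of_blockTriangular hL hLu

theorem transpose_mem_bigCell (hM : M ∈ bigCell b) : Mᵀ ∈ bigCell b := fun i => by
  rw [truncBlock_transpose, det_transpose]
  exact hM i

theorem blockTriangular_truncInvCols (hM : M ∈ bigCell b) :
    (truncInvCols b M).BlockTriangular b := fun _ j hij =>
  (inv_truncBlock_apply_of_not_le (hM j) fun h => not_le.2 hij h.1).trans
    (one_apply_ne fun h => (h ▸ hij).false)

theorem blockUnitriangular_lowerFactor (hM : M ∈ bigCell b) :
    (lowerFactor b M).BlockUnitriangular (toDual ∘ b) := by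
  intro i j hij
  replace hij : b i ≤ b j := toDual_le_toDual.1 (not_lt.1 hij)
  calc (M * truncInvCols b M) i j
      = (truncBlock b (b j) M * (truncBlock b (b j) M)⁻¹) i j := by
        simp only [mul_apply]
        refine sum_congr rfl fun k _ => ?_
        by_cases hk : b k ≤ b j
        · rw [truncBlock_apply, if_pos ⟨hij, hk⟩]
          rfl
        · rw [truncInvCols, of_apply, inv_truncBlock_apply_of_not_le (hM j) fun h => hk h.1,
            one_apply_ne (ne_of_apply_ne b fun h => hk h.le), mul_zero, mul_zero]
    _ = (1 : Matrix m m R) i j := by rw [mul_nonsing_inv _ (hM j)]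

theorem blockUnitriangular_upperFactor (hM : M ∈ bigCell b) :
    (upperFactor b M).BlockUnitriangular b :=
  blockUnitriangular_transpose_iff.1 <| by
    rw [upperFactor, transpose_transpose]
    exact blockUnitriangular_lowerFactor (transpose_mem_bigCell hM)

theorem det_mul_det_truncInvCols (hM : M ∈ bigCell b) : M.det * (truncInvCols b M).det = 1 := by
  rw [← det_mul]
  exact (blockUnitriangular_lowerFactor hM).det_eq_one

theorem isUnit_of_mem_bigCell (hM : M ∈ bigCell b) : IsUnit M :=
  (isUnit_iff_isUnit_det M).2 (.of_mul_eq_one _ (det_mul_det_truncInvCols hM))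

theorem blockTriangular_inv_lowerFactor_mul (hM : M ∈ bigCell b) :
    ((lowerFactor b M)⁻¹ * M).BlockTriangular b := by
  have := (truncInvCols b M).invertibleOfIsUnitDet
    (.of_mul_eq_one_right _ (det_mul_det_truncInvCols hM))
  rw [lowerFactor, mul_inv_rev, Matrix.mul_assoc,
    nonsing_inv_mul _ ((isUnit_iff_isUnit_det M).1 (isUnit_of_mem_bigCell hM)), mul_one]
  exact blockTriangular_inv_of_blockTriangular (blockTriangular_truncInvCols hM)

theorem blockTriangular_mul_inv_upperFactor (hM : M ∈ bigCell b) :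
    (M * (upperFactor b M)⁻¹).BlockTriangular (toDual ∘ b) := by
  have := (blockTriangular_inv_lowerFactor_mul (transpose_mem_bigCell hM)).transpose
  rwa [transpose_mul, transpose_transpose, transpose_nonsing_inv] at this

theorem blockTriangular_diagFactor (hM : M ∈ bigCell b) : (diagFactor b M).BlockTriangular b :=
  (blockTriangular_inv_lowerFactor_mul hM).mul
    (blockUnitriangular_upperFactor hM).inv.blockTriangular

theorem blockTriangular_toDual_diagFactor (hM : M ∈ bigCell b) :
    (diagFactor b M).BlockTriangular (toDual ∘ b) := by
  rw [diagFactor, Matrix.mul_assoc]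
  exact (blockUnitriangular_lowerFactor hM).inv.blockTriangular.mul
    (blockTriangular_mul_inv_upperFactor hM)

theorem isUnit_diagFactor (hM : M ∈ bigCell b) : IsUnit (diagFactor b M) :=
  ((blockUnitriangular_lowerFactor hM).inv.isUnit.mul (isUnit_of_mem_bigCell hM)).mul
    (blockUnitriangular_upperFactor hM).inv.isUnit

theorem lowerFactor_mul_diagFactor_mul_upperFactor (hM : M ∈ bigCell b) :
    lowerFactor b M * diagFactor b M * upperFactor b M = M := by
  have := (blockUnitriangular_lowerFactor hM).isUnit.invertible
  have := (blockUnitriangular_upperFactor hM).isUnit.invertible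
  rw [diagFactor, ← Matrix.mul_assoc, ← Matrix.mul_assoc, mul_inv_of_invertible, one_mul,
    inv_mul_cancel_right_of_invertible]

end BigCell

section LDU

variable [Fintype m] [CommRing R]

variable (b) in
def lduSet : Set (Matrix m m R × Matrix m m R × Matrix m m R) :=
  {p | p.1.BlockUnitriangular (toDual ∘ b) ∧
    ((p.2.1.BlockTriangular b ∧ p.2.1.BlockTriangular (toDual ∘ b)) ∧ IsUnit p.2.1) ∧
    p.2.2.BlockUnitriangular b}

theorem mapsTo_mul_lduSet_bigCell :
    Set.MapsTo (fun p : Matrix m m R × Matrix m m R × Matrix m m R => p.1 * p.2.1 * p.2.2)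
      (lduSet b) (bigCell b) := fun _ hp =>
  mul_mem_bigCell (hp.1.blockTriangular.mul hp.2.1.1.2) (hp.1.isUnit.mul hp.2.1.2) hp.2.2

theorem injOn_mul_lduSet :
    Set.InjOn (fun p : Matrix m m R × Matrix m m R × Matrix m m R => p.1 * p.2.1 * p.2.2)
      (lduSet b) := by
  rintro ⟨u₁, r₁, v₁⟩ ⟨hu₁, ⟨⟨hr₁, hr₁'⟩, hr₁u⟩, hv₁⟩ ⟨u₂, r₂, v₂⟩ ⟨hu₂, ⟨⟨hr₂, hr₂'⟩, -⟩, hv₂⟩ h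
  obtain ⟨rfl, hrv⟩ := eq_of_mul_eq_mul_of_blockTriangular hu₁ hu₂
    (hr₁.mul hv₁.blockTriangular) (hr₁u.mul hv₁.isUnit) (hr₂.mul hv₂.blockTriangular)
    (by simpa only [Matrix.mul_assoc] using h)
  -- transposed, `r₁ * v₁ = r₂ * v₂` has block lower unitriangular factors `vᵀ` on the left
  obtain ⟨hv, hr⟩ := eq_of_mul_eq_mul_of_blockTriangular
    (blockUnitriangular_transpose_iff.2 hv₁) (blockUnitriangular_transpose_iff.2 hv₂)
    hr₁'.transpose ((isUnit_transpose r₁).2 hr₁u) hr₂'.transpose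
    (by rw [← transpose_mul, ← transpose_mul, hrv])
  exact Prod.ext rfl (Prod.ext (transpose_inj.1 hr) (transpose_inj.1 hv))

theorem lduFactors_mem_lduSet {M : Matrix m m R} (hM : M ∈ bigCell b) :
    (lowerFactor b M, diagFactor b M, upperFactor b M) ∈ lduSet b :=
  ⟨blockUnitriangular_lowerFactor hM,
    ⟨⟨blockTriangular_diagFactor hM, blockTriangular_toDual_diagFactor hM⟩, isUnit_diagFactor hM⟩,
    blockUnitriangular_upperFactor hM⟩

end LDU

section Topology

variable [Fintype m] {K : Type*} [Field K] [TopologicalSpace K] [IsTopologicalDivisionRing K]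

theorem isOpen_bigCell [T1Space K] : IsOpen (bigCell b : Set (Matrix m m K)) := by
  simp only [bigCell, isUnit_iff_ne_zero, Set.ofPred_forall]
  exact isOpen_iInter_of_finite fun i =>
    isOpen_compl_singleton.preimage continuous_truncBlock.matrix_det

theorem continuousOn_truncInvCols :
    ContinuousOn (truncInvCols b : Matrix m m K → Matrix m m K) (bigCell b) :=
  continuousOn_pi.2 fun i => continuousOn_pi.2 fun j =>
    ((continuous_apply j).comp (continuous_apply i)).comp_continuousOn
      (continuous_truncBlock.continuousOn.matrix_inv fun _ hM => (hM j).ne_zero)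

theorem continuousOn_lowerFactor :
    ContinuousOn (lowerFactor b : Matrix m m K → Matrix m m K) (bigCell b) :=
  continuousOn_id.mul continuousOn_truncInvCols

theorem continuousOn_upperFactor :
    ContinuousOn (upperFactor b : Matrix m m K → Matrix m m K) (bigCell b) :=
  continuous_id.matrix_transpose.comp_continuousOn
    (continuousOn_lowerFactor.comp continuous_id.matrix_transpose.continuousOn
      fun _ hM => transpose_mem_bigCell hM)

theorem continuousOn_diagFactor :
    ContinuousOn (diagFactor b : Matrix m m K → Matrix m m K) (bigCell b) :=
  ((continuousOn_lowerFactor.matrix_inv fun _ hM =>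
      (blockUnitriangular_lowerFactor hM).det_eq_one ▸ one_ne_zero).mul continuousOn_id).mul
    (continuousOn_upperFactor.matrix_inv fun _ hM =>
      (blockUnitriangular_upperFactor hM).det_eq_one ▸ one_ne_zero)

variable (b) in
noncomputable def lduHomeomorph :
    (lduSet b : Set (Matrix m m K × Matrix m m K × Matrix m m K)) ≃ₜ
      (bigCell b : Set (Matrix m m K)) where
  toFun p := ⟨p.1.1 * p.1.2.1 * p.1.2.2, mapsTo_mul_lduSet_bigCell p.2⟩
  invFun M := ⟨(lowerFactor b M, diagFactor b M, upperFactor b M), lduFactors_mem_lduSet M.2⟩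
  left_inv p := Subtype.ext <| injOn_mul_lduSet
    (lduFactors_mem_lduSet (mapsTo_mul_lduSet_bigCell p.2)) p.2
    (lowerFactor_mul_diagFactor_mul_upperFactor (mapsTo_mul_lduSet_bigCell p.2))
  right_inv M := Subtype.ext (lowerFactor_mul_diagFactor_mul_upperFactor M.2)
  continuous_toFun := by fun_prop
  continuous_invFun := (continuousOn_lowerFactor.domRestrict.prodMk
    (continuousOn_diagFactor.domRestrict.prodMk continuousOn_upperFactor.domRestrict)).subtype_mk _

theorem isOpenEmbedding_mul_lduSet [T1Space K] :
    IsOpenEmbedding fun p : (lduSet b : Set (Matrix m m K × Matrix m m K × Matrix m m K)) =>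
      p.1.1 * p.1.2.1 * p.1.2.2 :=
  isOpen_bigCell.isOpenEmbedding_subtypeVal.comp (lduHomeomorph b).isOpenEmbedding

end Topology

end LinearOrder

theorem exists_eq_one_add_iff [Ring R] {p : m → m → Prop} {M : Matrix m m R} :
    (∃ N : Matrix m m R, (∀ i j, p i j → N i j = 0) ∧ M = 1 + N) ↔
      ∀ i j, p i j → M i j = (1 : Matrix m m R) i j := by
  constructor
  · rintro ⟨N, hN, rfl⟩ i j hij
    rw [add_apply, hN i j hij, add_zero]
  · exact fun h => ⟨M - 1, fun i j hij => sub_eq_zero.2 (h i j hij), (add_sub_cancel 1 M).symm⟩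

end Matrix

theorem isStrictUpperUnip_iff {K : Type*} [Ring K] {n : ℕ} {b : Fin n → ℕ}
    {M : Matrix (Fin n) (Fin n) K} : IsStrictUpperUnip b M ↔ M.BlockUnitriangular b :=
  Matrix.exists_eq_one_add_iff

theorem isStrictLowerUnip_iff {K : Type*} [Ring K] {n : ℕ} {b : Fin n → ℕ}
    {M : Matrix (Fin n) (Fin n) K} :
    IsStrictLowerUnip b M ↔ M.BlockUnitriangular (OrderDual.toDual ∘ b) :=
  Matrix.exists_eq_one_add_iff

theorem isBlockDiag_iff {K : Type*} [Zero K] {n : ℕ} {b : Fin n → ℕ}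
    {M : Matrix (Fin n) (Fin n) K} :
    IsBlockDiag b M ↔ M.BlockTriangular b ∧ M.BlockTriangular (OrderDual.toDual ∘ b) :=
  ⟨fun h => ⟨fun i j hij => h i j hij.ne', fun i j hij => h i j (toDual_lt_toDual.1 hij).ne⟩,
    fun h _ _ hij => hij.lt_or_gt.elim (fun hlt => h.2 hlt) fun hgt => h.1 hgt⟩

theorem lduSet_eq_setOf_isStrictLowerUnip {K : Type*} [CommRing K] {n : ℕ} (b : Fin n → ℕ) :
    Matrix.lduSet (R := K) b = {p | IsStrictLowerUnip b p.1 ∧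
      (IsBlockDiag b p.2.1 ∧ IsUnit p.2.1) ∧ IsStrictUpperUnip b p.2.2} := by
  ext p
  simp only [Set.mem_ofPred_eq, isStrictLowerUnip_iff, isBlockDiag_iff, isStrictUpperUnip_iff]
  rfl

/-- Over a nontrivially normed field, the multiplication map
`(u, r, v) ↦ u * r * v` from the set of triples with `u` strictly-lower block unipotent, `r`
block diagonal invertible, `v` strictly-upper block unipotent, is an open embedding into
`M_n(K)` whose image consists of invertible matrices. -/
theorem stmt6 {K : Type*} [NontriviallyNormedField K] {n : ℕ} (b : Fin n → ℕ) :
    Function.Injective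
      (fun t : {p : Matrix (Fin n) (Fin n) K × Matrix (Fin n) (Fin n) K ×
          Matrix (Fin n) (Fin n) K //
          IsStrictLowerUnip b p.1 ∧ (IsBlockDiag b p.2.1 ∧ IsUnit p.2.1) ∧
            IsStrictUpperUnip b p.2.2} =>
        t.1.1 * t.1.2.1 * t.1.2.2) ∧
    IsOpenEmbedding
      (fun t : {p : Matrix (Fin n) (Fin n) K × Matrix (Fin n) (Fin n) K ×
          Matrix (Fin n) (Fin n) K //
          IsStrictLowerUnip b p.1 ∧ (IsBlockDiag b p.2.1 ∧ IsUnit p.2.1) ∧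
            IsStrictUpperUnip b p.2.2} =>
        t.1.1 * t.1.2.1 * t.1.2.2) ∧
    ∀ t : {p : Matrix (Fin n) (Fin n) K × Matrix (Fin n) (Fin n) K ×
        Matrix (Fin n) (Fin n) K //
        IsStrictLowerUnip b p.1 ∧ (IsBlockDiag b p.2.1 ∧ IsUnit p.2.1) ∧
          IsStrictUpperUnip b p.2.2},
      IsUnit (t.1.1 * t.1.2.1 * t.1.2.2) := by
  let e := Homeomorph.setCongr (lduSet_eq_setOf_isStrictLowerUnip (K := K) b).symm
  have h := Matrix.isOpenEmbedding_mul_lduSet.comp e.isOpenEmbedding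
  exact ⟨h.injective, h, fun t =>
    Matrix.isUnit_of_mem_bigCell (Matrix.mapsTo_mul_lduSet_bigCell (e t).2)⟩
end

section
/- Let K be a normed field, n : ℕ, b : Fin n → ℕ, and let g ∈ M_n(K) be block upper triangular (g i j = 0 whenever b j < b i). Let d : Fin n → Kˣ satisfy: d i = d j whenever b i = b j, and ‖d i / d j‖ < 1 whenever b i < b j, and let a be the diagonal matrix with entries d. Then the sequence k ↦ aᵏ · g · a⁻ᵏ converges entrywise, as k → ∞, to the block diagonal part D(g) of g. -/
open Filter Topology

theorem Matrix.diagonal_pow_mul_mul_diagonal_pow_apply {ι R : Type*} [Fintype ι] [DecidableEq ι]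
    [Semiring R] (d e : ι → R) (M : Matrix ι ι R) (k : ℕ) (i j : ι) :
    (Matrix.diagonal d ^ k * M * Matrix.diagonal e ^ k) i j = d i ^ k * M i j * e j ^ k := by
  simp only [Matrix.diagonal_pow, Matrix.diagonal_mul, Matrix.mul_diagonal, Pi.pow_apply]

/-- Let `g` be block upper triangular, and `a = diagonal d` with `d` constant on
blocks and `‖d i / d j‖ < 1` whenever `b i < b j`. Then `aᵏ * g * a⁻ᵏ` converges entrywise to
the block diagonal part of `g`. -/
theorem stmt7 {K : Type*} [NormedField K] {n : ℕ} (b : Fin n → ℕ)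
    (g : Matrix (Fin n) (Fin n) K)
    (hg : ∀ i j, b j < b i → g i j = 0)
    (d : Fin n → Kˣ)
    (heq : ∀ i j, b i = b j → d i = d j)
    (hlt : ∀ i j, b i < b j → ‖(d i : K) / (d j : K)‖ < 1) :
    Tendsto
      (fun k : ℕ =>
        (Matrix.diagonal fun i => (d i : K)) ^ k * g *
          (Matrix.diagonal fun i => ((d i : K)⁻¹)) ^ k)
      atTop
      (nhds (Matrix.of fun i j => if b i = b j then g i j else 0)) := by
  refine tendsto_pi_nhds.2 fun i => tendsto_pi_nhds.2 fun j => ?_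
  have hentry : ∀ k : ℕ, (d i : K) ^ k * g i j * (d j : K)⁻¹ ^ k = ((d i : K) / d j) ^ k * g i j :=
    fun k => by rw [div_pow, inv_pow]; ring
  simp only [Matrix.diagonal_pow_mul_mul_diagonal_pow_apply, hentry, Matrix.of_apply]
  rcases lt_trichotomy (b i) (b j) with hij | hij | hji
  · rw [if_neg hij.ne, ← zero_mul (g i j)]
    exact (tendsto_pow_atTop_nhds_zero_of_norm_lt_one (hlt i j hij)).mul_const _
  · simp [hij, heq i j hij]
  · simp [hg i j hji]
end

section
/- Let K be a nontrivially normed field, n : ℕ, b : Fin n → ℕ, Γ a group, and ρ : Γ →* GL_n(K) a group homomorphism such that for every γ ∈ Γ the matrix ρ(γ) is block upper triangular (ρ(γ) i j = 0 whenever b j < b i). Then: (1) there exists a group homomorphism σ : Γ →* GL_n(K) with σ(γ) equal to the block diagonal part D(ρ(γ)) for every γ; and (2) there exists an invertible diagonal matrix a ∈ GL_n(K) such that for every γ ∈ Γ, aᵏ · ρ(γ) · a⁻ᵏ converges entrywise to σ(γ) as k → ∞; in particular σ lies in the closure of the conjugation orbit of ρ. -/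
/-!
Conjugating by the diagonal matrix `a = diag(t ^ b i)` with `‖t‖ > 1` multiplies the `(i, j)` entry
by `t ^ (b i - b j)`: entries inside a diagonal block are fixed, entries above the blocks are scaled
by a power of norm `< 1` and tend to `0`, and entries below the blocks vanish by triangularity.
So `aᵏ ρ(γ) a⁻ᵏ` tends to the block diagonal part of `ρ(γ)`, and the block diagonal part is
multiplicative on block upper triangular matrices, hence defines a homomorphism into `GL_n(K)`.
-/

open Filter Topology

lemma tendsto_pow_mul_mul_inv_pow {K : Type*} [NormedField K] {t : K} (ht : 1 < ‖t‖)
    {m n : ℕ} {x : K} (hx : n < m → x = 0) :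
    Tendsto (fun k : ℕ => (t ^ m) ^ k * x * (t ^ n)⁻¹ ^ k) atTop
      (𝓝 (if m = n then x else 0)) := by
  have ht0 : t ≠ 0 := norm_pos_iff.mp (one_pos.trans ht)
  rcases lt_trichotomy m n with hmn | rfl | hmn
  · have hlt : ‖t ^ m * (t ^ n)⁻¹‖ < 1 := by
      rw [norm_mul, norm_inv, norm_pow, norm_pow, mul_inv_lt_iff₀ (by positivity), one_mul]
      exact pow_lt_pow_right₀ ht hmn
    simpa [hmn.ne, mul_pow, mul_right_comm] using
      (tendsto_pow_atTop_nhds_zero_of_norm_lt_one hlt).mul_const x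
  · simp [mul_right_comm _ x, ht0]
  · simp [hx hmn]

namespace Matrix

variable {ι R α : Type*} (b : ι → α)

def blockDiagPart [DecidableEq α] [Zero R] (M : Matrix ι ι R) : Matrix ι ι R :=
  of fun i j => if b i = b j then M i j else 0

@[simp]
lemma blockDiagPart_apply [DecidableEq α] [Zero R] (M : Matrix ι ι R) (i j : ι) :
    blockDiagPart b M i j = if b i = b j then M i j else 0 := rfl

lemma blockDiagPart_one [DecidableEq α] [DecidableEq ι] [Zero R] [One R] :
    blockDiagPart b (1 : Matrix ι ι R) = 1 := by
  ext i j
  by_cases h : i = j <;> simp [h, one_apply]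

variable [LinearOrder α]

lemma BlockTriangular.blockDiagPart_mul [Fintype ι] [NonUnitalNonAssocSemiring R]
    {M N : Matrix ι ι R} (hM : M.BlockTriangular b) (hN : N.BlockTriangular b) :
    blockDiagPart b (M * N) = blockDiagPart b M * blockDiagPart b N := by
  ext i j
  simp only [blockDiagPart_apply, mul_apply]
  split_ifs with hij
  · refine Finset.sum_congr rfl fun k _ => ?_
    rcases lt_trichotomy (b k) (b i) with hki | hki | hki
    · simp [hM hki]
    · simp [hki, ← hij]
    · simp [hN (hij ▸ hki)]
  · refine (Finset.sum_eq_zero fun k _ => ?_).symm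
    split_ifs with hik hkj <;> simp_all

def blockDiagPartHom [Fintype ι] [DecidableEq ι] [Semiring R] {G : Type*} [Group G]
    (ρ : G →* GL ι R) (hρ : ∀ g, (ρ g : Matrix ι ι R).BlockTriangular b) : G →* GL ι R :=
  MonoidHom.toHomUnits
    { toFun g := blockDiagPart b (ρ g : Matrix ι ι R)
      map_one' := by simpa using blockDiagPart_one b
      map_mul' g h := by simpa using (hρ g).blockDiagPart_mul b (hρ h) }

@[simp]
lemma val_blockDiagPartHom_apply [Fintype ι] [DecidableEq ι] [Semiring R] {G : Type*} [Group G]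
    (ρ : G →* GL ι R) (hρ : ∀ g, (ρ g : Matrix ι ι R).BlockTriangular b) (g : G) :
    (blockDiagPartHom b ρ hρ g : Matrix ι ι R) = blockDiagPart b (ρ g : Matrix ι ι R) := rfl

section Normed

variable {ι K : Type*} [Fintype ι] [DecidableEq ι] [NormedField K]

lemma BlockTriangular.tendsto_diagonal_pow_mul_mul_diagonal_inv_pow {b : ι → ℕ}
    {M : Matrix ι ι K} (hM : M.BlockTriangular b) {t : K} (ht : 1 < ‖t‖) :
    Tendsto
      (fun k : ℕ => diagonal (fun i => (t ^ b i) ^ k) * M * diagonal (fun i => (t ^ b i)⁻¹ ^ k))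
      atTop (𝓝 (blockDiagPart b M)) := by
  refine tendsto_pi_nhds.mpr fun i => tendsto_pi_nhds.mpr fun j => ?_
  simpa only [mul_diagonal, diagonal_mul, blockDiagPart_apply] using
    tendsto_pow_mul_mul_inv_pow ht fun h => hM h

def diagonalPowUnits (u : Kˣ) (b : ι → ℕ) : GL ι K :=
  Units.map (diagonalRingHom ι K : (ι → K) →* Matrix ι ι K)
    (MulEquiv.piUnits.symm fun i => u ^ b i)

@[simp]
lemma val_diagonalPowUnits (u : Kˣ) (b : ι → ℕ) :
    (diagonalPowUnits u b : Matrix ι ι K) = diagonal fun i => (u : K) ^ b i := by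
  ext i j
  simp [diagonalPowUnits, diagonal_apply]

lemma val_diagonalPowUnits_pow_mul_mul_inv_pow (u : Kˣ) (b : ι → ℕ) (g : GL ι K) (k : ℕ) :
    ((diagonalPowUnits u b ^ k * g * (diagonalPowUnits u b)⁻¹ ^ k : GL ι K) : Matrix ι ι K) =
      diagonal (fun i => ((u : K) ^ b i) ^ k) * g *
        diagonal (fun i => ((u : K) ^ b i)⁻¹ ^ k) := by
  ext i j
  simp [diagonalPowUnits, diagonal_pow, mul_diagonal, diagonal_mul]

end Normed

end Matrix

/-- If `ρ : Γ →* GL_n(K)` is blockwise upper triangular (w.r.t. a block function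
`b`), then its blockwise diagonal part is again a group homomorphism `σ : Γ →* GL_n(K)`, and
there is an invertible diagonal matrix `a` such that `aᵏ ρ(γ) a⁻ᵏ → σ(γ)` entrywise for every
`γ`; in particular `σ` lies in the closure of the conjugation orbit of `ρ`. -/
theorem stmt8 {K : Type*} [NontriviallyNormedField K] {n : ℕ} (b : Fin n → ℕ)
    {Γ : Type*} [Group Γ]
    (ρ : Γ →* Matrix.GeneralLinearGroup (Fin n) K)
    (hρ : ∀ γ : Γ, ∀ i j, b j < b i → (ρ γ : Matrix (Fin n) (Fin n) K) i j = 0) :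
    ∃ σ : Γ →* Matrix.GeneralLinearGroup (Fin n) K,
      (∀ γ : Γ, ∀ i j, (σ γ : Matrix (Fin n) (Fin n) K) i j =
        if b i = b j then (ρ γ : Matrix (Fin n) (Fin n) K) i j else 0) ∧
      ∃ a : Matrix.GeneralLinearGroup (Fin n) K,
        (∃ dd : Fin n → K, (a : Matrix (Fin n) (Fin n) K) = Matrix.diagonal dd) ∧
        ∀ γ : Γ,
          Tendsto
            (fun k : ℕ =>
              ((a ^ k * ρ γ * a⁻¹ ^ k : Matrix.GeneralLinearGroup (Fin n) K) :
                Matrix (Fin n) (Fin n) K))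
            atTop (nhds ((σ γ : Matrix (Fin n) (Fin n) K))) := by
  have hρ' : ∀ γ, (ρ γ : Matrix (Fin n) (Fin n) K).BlockTriangular b := fun γ _ _ => hρ γ _ _
  obtain ⟨t, ht⟩ := NormedField.exists_one_lt_norm K
  let u : Kˣ := Units.mk0 t (norm_pos_iff.mp (one_pos.trans ht))
  refine ⟨Matrix.blockDiagPartHom b ρ hρ', fun γ i j => rfl, Matrix.diagonalPowUnits u b,
    ⟨_, Matrix.val_diagonalPowUnits u b⟩, fun γ => ?_⟩
  simpa only [Matrix.val_diagonalPowUnits_pow_mul_mul_inv_pow,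
    Matrix.val_blockDiagPartHom_apply, u, Units.val_mk0] using
    (hρ' γ).tendsto_diagonal_pow_mul_mul_diagonal_inv_pow ht
end

section
/- Let K be a normed field, n : ℕ, b : Fin n → ℕ. Let (d_k)_{k∈ℕ} be a sequence of maps Fin n → Kˣ such that for all k, d_k i = d_k j whenever b i = b j, and such that ‖d_k i / d_k j‖ → ∞ as k → ∞ whenever b i < b j; let a_k = diagonal(d_k). Then: (1) for every bounded sequence (N_k) of strictly-upper block unipotent matrices (there is C with ‖N_k i j‖ ≤ C for all k, i, j), one has a_k⁻¹ · N_k · a_k → 1 entrywise; and (2) for every bounded sequence (M_k) of strictly-lower block unipotent matrices, one has a_k · M_k · a_k⁻¹ → 1 entrywise. -/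
open Filter Topology

open Matrix

/-!
Conjugating by the diagonal matrix `a_k` multiplies the `(i, j)` entry by `d_k j / d_k i`
(or its inverse). Entries of `N_k - 1` vanish unless `b i < b j`, and on those entries the
factor `d_k j / d_k i` tends to `0` while `N_k i j` stays bounded. The lower-triangular case is
the transpose of the upper-triangular one.
-/

theorem IsStrictUpperUnip.apply_of_not_lt {K : Type*} [AddZeroClass K] [One K] {n : ℕ}
    {b : Fin n → ℕ} {M : Matrix (Fin n) (Fin n) K} (hM : IsStrictUpperUnip b M) {i j : Fin n}
    (h : ¬ b i < b j) : M i j = (1 : Matrix (Fin n) (Fin n) K) i j := by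
  obtain ⟨N, hN, rfl⟩ := hM
  simp [hN i j h]

theorem IsStrictLowerUnip.transpose {K : Type*} [Zero K] [One K] [Add K] {n : ℕ}
    {b : Fin n → ℕ} {M : Matrix (Fin n) (Fin n) K} (hM : IsStrictLowerUnip b M) :
    IsStrictUpperUnip b Mᵀ := by
  obtain ⟨N, hN, rfl⟩ := hM
  exact ⟨Nᵀ, fun i j h => hN j i h, by rw [transpose_add, transpose_one]⟩

theorem tendsto_inv_mul_mul_of_norm_div_tendsto_atTop {ι K : Type*} [NormedField K]
    {l : Filter ι} {u v x : ι → K} (hx : IsBoundedUnder (· ≤ ·) l (‖x ·‖))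
    (huv : Tendsto (fun k => ‖u k / v k‖) l atTop) :
    Tendsto (fun k => (u k)⁻¹ * x k * v k) l (𝓝 0) := by
  have hvu : Tendsto (fun k => v k / u k) l (𝓝 0) := by
    rw [tendsto_zero_iff_norm_tendsto_zero]
    refine huv.inv_tendsto_atTop.congr fun k => ?_
    simp only [Pi.inv_apply, norm_div, inv_div]
  refine (hvu.zero_mul_isBoundedUnder_le hx).congr fun k => ?_
  ring

section Conjugation

variable {ι K : Type*} [NormedField K] {l : Filter ι} {n : ℕ} (b : Fin n → ℕ)
  (d : ι → Fin n → Kˣ)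

theorem tendsto_diagonal_inv_mul_mul_diagonal
    (hinf : ∀ i j, b i < b j → Tendsto (fun k => ‖(d k i : K) / (d k j : K)‖) l atTop)
    {N : ι → Matrix (Fin n) (Fin n) K} (hN : ∀ k, IsStrictUpperUnip b (N k))
    (hbdd : ∃ C : ℝ, ∀ k i j, ‖N k i j‖ ≤ C) :
    Tendsto (fun k => diagonal (fun i => (d k i : K)⁻¹) * N k * diagonal (fun i => (d k i : K)))
      l (𝓝 1) := by
  obtain ⟨C, hC⟩ := hbdd
  refine tendsto_pi_nhds.2 fun i => tendsto_pi_nhds.2 fun j => ?_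
  simp only [mul_diagonal, diagonal_mul]
  by_cases hij : b i < b j
  · rw [one_apply_ne (ne_of_apply_ne b hij.ne)]
    exact tendsto_inv_mul_mul_of_norm_div_tendsto_atTop
      (isBoundedUnder_of ⟨C, fun k => hC k i j⟩) (hinf i j hij)
  · have hconst : ∀ k, (d k i : K)⁻¹ * N k i j * d k j = (1 : Matrix (Fin n) (Fin n) K) i j := by
      intro k
      rw [(hN k).apply_of_not_lt hij]
      rcases eq_or_ne i j with rfl | hne
      · simp
      · simp [one_apply_ne hne]
    simpa only [hconst] using tendsto_const_nhds

theorem tendsto_diagonal_mul_mul_diagonal_inv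
    (hinf : ∀ i j, b i < b j → Tendsto (fun k => ‖(d k i : K) / (d k j : K)‖) l atTop)
    {M : ι → Matrix (Fin n) (Fin n) K} (hM : ∀ k, IsStrictLowerUnip b (M k))
    (hbdd : ∃ C : ℝ, ∀ k i j, ‖M k i j‖ ≤ C) :
    Tendsto (fun k => diagonal (fun i => (d k i : K)) * M k * diagonal (fun i => (d k i : K)⁻¹))
      l (𝓝 1) := by
  obtain ⟨C, hC⟩ := hbdd
  have hupper := tendsto_diagonal_inv_mul_mul_diagonal b d hinf (fun k => (hM k).transpose)
    ⟨C, fun k i j => hC k j i⟩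
  have htranspose : Tendsto (fun A : Matrix (Fin n) (Fin n) K => Aᵀ) (𝓝 1) (𝓝 1) := by
    simpa using continuous_id.matrix_transpose.tendsto (1 : Matrix (Fin n) (Fin n) K)
  refine (htranspose.comp hupper).congr fun k => ?_
  simp [transpose_mul, Matrix.mul_assoc]

end Conjugation

theorem stmt9_general {K : Type*} [NormedField K] {n : ℕ} (b : Fin n → ℕ)
    (d : ℕ → Fin n → Kˣ)
    (hinf : ∀ i j, b i < b j →
      Tendsto (fun k : ℕ => ‖(d k i : K) / (d k j : K)‖) atTop atTop) :
    (∀ N : ℕ → Matrix (Fin n) (Fin n) K,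
      (∀ k, IsStrictUpperUnip b (N k)) →
      (∃ C : ℝ, ∀ k i j, ‖N k i j‖ ≤ C) →
      Tendsto
        (fun k : ℕ =>
          (Matrix.diagonal fun i => ((d k i : K))⁻¹) * N k *
            Matrix.diagonal (fun i => (d k i : K)))
        atTop (nhds 1)) ∧
    (∀ M : ℕ → Matrix (Fin n) (Fin n) K,
      (∀ k, IsStrictLowerUnip b (M k)) →
      (∃ C : ℝ, ∀ k i j, ‖M k i j‖ ≤ C) →
      Tendsto
        (fun k : ℕ =>
          (Matrix.diagonal fun i => (d k i : K)) * M k *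
            Matrix.diagonal (fun i => ((d k i : K))⁻¹))
        atTop (nhds 1)) :=
  ⟨fun _ hN hbdd => tendsto_diagonal_inv_mul_mul_diagonal b d hinf hN hbdd,
    fun _ hM hbdd => tendsto_diagonal_mul_mul_diagonal_inv b d hinf hM hbdd⟩

/-- Let `(d_k)` be a sequence of invertible diagonal data, constant on blocks,
with `‖d_k i / d_k j‖ → ∞` whenever `b i < b j`, and `a_k = diagonal (d_k)`. Then conjugation
by `a_k⁻¹` contracts bounded sequences of strictly-upper block unipotent matrices to `1`, and
conjugation by `a_k` contracts bounded sequences of strictly-lower block unipotent matrices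
to `1` (entrywise). -/
theorem stmt9 {K : Type*} [NormedField K] {n : ℕ} (b : Fin n → ℕ)
    (d : ℕ → Fin n → Kˣ)
    (heq : ∀ k : ℕ, ∀ i j, b i = b j → d k i = d k j)
    (hinf : ∀ i j, b i < b j →
      Tendsto (fun k : ℕ => ‖(d k i : K) / (d k j : K)‖) atTop atTop) :
    (∀ N : ℕ → Matrix (Fin n) (Fin n) K,
      (∀ k, IsStrictUpperUnip b (N k)) →
      (∃ C : ℝ, ∀ k i j, ‖N k i j‖ ≤ C) →
      Tendsto
        (fun k : ℕ =>
          (Matrix.diagonal fun i => ((d k i : K))⁻¹) * N k *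
            Matrix.diagonal (fun i => (d k i : K)))
        atTop (nhds 1)) ∧
    (∀ M : ℕ → Matrix (Fin n) (Fin n) K,
      (∀ k, IsStrictLowerUnip b (M k)) →
      (∃ C : ℝ, ∀ k i j, ‖M k i j‖ ≤ C) →
      Tendsto
        (fun k : ℕ =>
          (Matrix.diagonal fun i => (d k i : K)) * M k *
            Matrix.diagonal (fun i => ((d k i : K))⁻¹))
        atTop (nhds 1)) :=
  stmt9_general b d hinf
end

section
/- Let K be a normed field, n : ℕ, b : Fin n → ℕ. Let (d_k) be a sequence of maps Fin n → Kˣ with d_k i = d_k j whenever b i = b j, and ‖d_k i / d_k j‖ → ∞ whenever b i < b j; let a_k = diagonal(d_k). Suppose (g_k) is a sequence in M_n(K) with g_k → g entrywise and a_k · g_k · a_k⁻¹ → g' entrywise. Then: (1) g is block lower triangular, i.e. g i j = 0 whenever b i < b j; (2) g' is block upper triangular, i.e. g' i j = 0 whenever b j < b i; (3) g and g' have the same block diagonal part, i.e. g i j = g' i j whenever b i = b j. -/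
/-!
Entrywise, `(a_k g_k a_k⁻¹) i j = (d_k i / d_k j) • g_k i j`. Above the block diagonal the scalar
blows up while both sequences converge, which forces the limit of `g_k i j` to vanish; below it
the same argument applied to `g_k i j = (d_k j / d_k i) • (a_k g_k a_k⁻¹) i j` kills `g' i j`;
on the block diagonal the scalar is `1`.
-/

open Filter Topology

theorem eq_zero_of_tendsto_of_eq_mul {ι 𝕜 : Type*} [NormedDivisionRing 𝕜] {l : Filter ι}
    [l.NeBot] {r u v : ι → 𝕜} {a b : 𝕜} (hr : Tendsto (fun k => ‖r k‖) l atTop)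
    (hu : Tendsto u l (𝓝 a)) (hv : Tendsto v l (𝓝 b)) (huv : ∀ k, u k = r k * v k) :
    b = 0 := by
  have hr_inv : Tendsto (fun k => (r k)⁻¹) l (𝓝 0) :=
    tendsto_inv₀_cobounded.comp (tendsto_norm_atTop_iff_cobounded.1 hr)
  have hv_eq : (fun k => (r k)⁻¹ * u k) =ᶠ[l] v := by
    filter_upwards [hr.eventually_gt_atTop 0] with k hk
    rw [huv, inv_mul_cancel_left₀ (norm_pos_iff.1 hk)]
  exact tendsto_nhds_unique hv (by simpa using (hr_inv.mul hu).congr' hv_eq)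

theorem Matrix.diagonal_mul_mul_diagonal_inv_apply {ι K : Type*} [Fintype ι] [DecidableEq ι]
    [Field K] (d : ι → K) (M : Matrix ι ι K) (i j : ι) :
    (diagonal d * M * diagonal fun i => (d i)⁻¹) i j = d i / d j * M i j := by
  rw [mul_diagonal, diagonal_mul, div_eq_mul_inv, mul_right_comm]

/-- Let `(d_k)` be invertible diagonal data, constant on blocks, with
`‖d_k i / d_k j‖ → ∞` whenever `b i < b j`, and `a_k = diagonal (d_k)`. If `g_k → g` and
`a_k * g_k * a_k⁻¹ → g'` entrywise, then `g` is block lower triangular, `g'` is block upper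
triangular, and `g` and `g'` have the same block diagonal part. -/
theorem stmt11 {K : Type*} [NormedField K] {n : ℕ} (b : Fin n → ℕ)
    (d : ℕ → Fin n → Kˣ)
    (heq : ∀ k : ℕ, ∀ i j, b i = b j → d k i = d k j)
    (hinf : ∀ i j, b i < b j →
      Tendsto (fun k : ℕ => ‖(d k i : K) / (d k j : K)‖) atTop atTop)
    (gseq : ℕ → Matrix (Fin n) (Fin n) K) (g g' : Matrix (Fin n) (Fin n) K)
    (hg : Tendsto gseq atTop (nhds g))
    (hg' : Tendsto
      (fun k : ℕ =>
        (Matrix.diagonal fun i => (d k i : K)) * gseq k *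
          Matrix.diagonal (fun i => ((d k i : K))⁻¹))
      atTop (nhds g')) :
    (∀ i j, b i < b j → g i j = 0) ∧
    (∀ i j, b j < b i → g' i j = 0) ∧
    (∀ i j, b i = b j → g i j = g' i j) := by
  have hg_apply (i j) : Tendsto (fun k => gseq k i j) atTop (𝓝 (g i j)) :=
    ((continuous_apply_apply i j).tendsto g).comp hg
  have hg'_apply (i j) :
      Tendsto (fun k => (d k i : K) / d k j * gseq k i j) atTop (𝓝 (g' i j)) :=
    (((continuous_apply_apply i j).tendsto g').comp hg').congr fun _ =>
      Matrix.diagonal_mul_mul_diagonal_inv_apply _ _ i j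
  refine ⟨fun i j hij => ?_, fun i j hij => ?_, fun i j hij => ?_⟩
  · exact eq_zero_of_tendsto_of_eq_mul (hinf i j hij) (hg'_apply i j) (hg_apply i j) fun _ => rfl
  · refine eq_zero_of_tendsto_of_eq_mul (hinf j i hij) (hg_apply i j) (hg'_apply i j) fun k => ?_
    rw [← mul_assoc, div_mul_div_cancel₀ (d k i).ne_zero, div_self (d k j).ne_zero, one_mul]
  · refine tendsto_nhds_unique (hg_apply i j) ((hg'_apply i j).congr fun k => ?_)
    rw [heq k i j hij, div_self (d k j).ne_zero, one_mul]
end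

section
/- Let K be a normed field, n : ℕ, b : Fin n → ℕ. Let (d_k) be a sequence of maps Fin n → Kˣ with d_k i = d_k j whenever b i = b j, and ‖d_k i / d_k j‖ → ∞ whenever b i < b j; let a_k = diagonal(d_k). Let r ∈ M_n(K) be block diagonal (r i j = 0 unless b i = b j), u strictly-lower block unipotent, and n' strictly-upper block unipotent. Let (u_k) be strictly-lower block unipotent matrices with u_k → u, (r_k) block diagonal matrices with r_k → r, and (n'_k) strictly-upper block unipotent matrices with n'_k → n' (all entrywise). Set g_k = u_k · r_k · (a_k⁻¹ · n'_k · a_k). Then g_k → u · r and a_k · g_k · a_k⁻¹ → r · n' entrywise. -/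
/-!
Conjugation by `a = diagonal d` scales the `(i, j)` entry by `d i / d j` or its inverse. On the
strictly upper part of `a⁻¹ n'_k a` and the strictly lower part of `a u_k a⁻¹` this factor tends
to `0`, so both conjugated unipotent factors tend to `1`; and `a` commutes with block diagonal
matrices. Hence `g_k → u r · 1` and `a g_k a⁻¹ = (a u_k a⁻¹) r_k n'_k → 1 · r n'`.
-/

open Filter Topology

open Matrix

section Monoid

variable {M : Type*} [Monoid M]

lemma conj_mul_mul_conj_eq_of_commute {a a' r : M} (h₁ : a * a' = 1) (h₂ : a' * a = 1)
    (hr : Commute a r) (u m : M) :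
    a * (u * r * (a' * m * a)) * a' = a * u * a' * (r * m) := by
  have hr' : r * a' = a' * r := by
    calc r * a' = a' * a * r * a' := by rw [h₂, one_mul]
      _ = a' * (r * a) * a' := by rw [mul_assoc a', hr.eq]
      _ = a' * r := by rw [mul_assoc, mul_assoc, h₁, mul_one]
  calc a * (u * r * (a' * m * a)) * a' = a * u * (r * a') * m * (a * a') := by noncomm_ring
    _ = a * u * a' * (r * m) := by rw [h₁, hr']; noncomm_ring

end Monoid

section Conjugation

variable {K : Type*} [NormedField K] {ι : Type*} [Fintype ι] [DecidableEq ι]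
  {β : Type*} {l : Filter β}

lemma diagonal_inv_mul_diagonal {d : ι → K} (hd : ∀ i, d i ≠ 0) :
    diagonal (fun i => (d i)⁻¹) * diagonal d = 1 := by
  rw [diagonal_mul_diagonal, ← diagonal_one]
  exact congrArg diagonal (funext fun i => inv_mul_cancel₀ (hd i))

lemma diagonal_mul_diagonal_inv {d : ι → K} (hd : ∀ i, d i ≠ 0) :
    diagonal d * diagonal (fun i => (d i)⁻¹) = 1 := by
  rw [diagonal_mul_diagonal, ← diagonal_one]
  exact congrArg diagonal (funext fun i => mul_inv_cancel₀ (hd i))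

lemma diagonal_mul_mul_diagonal_apply (e f : ι → K) (N : Matrix ι ι K) (i j : ι) :
    (diagonal e * N * diagonal f) i j = e i * N i j * f j := by
  rw [mul_diagonal, diagonal_mul]

lemma tendsto_diagonal_conj_zero (R : ι → ι → Prop) (d : β → ι → K)
    (hd : ∀ i j, R i j → Tendsto (fun x => ‖d x i / d x j‖) l atTop)
    {N : β → Matrix ι ι K} {L : Matrix ι ι K} (hN : Tendsto N l (𝓝 L))
    (hsupp : ∀ x i j, ¬ R i j → N x i j = 0) :
    Tendsto (fun x => diagonal (fun i => (d x i)⁻¹) * N x * diagonal (d x)) l (𝓝 0) := by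
  refine tendsto_pi_nhds.2 fun i => tendsto_pi_nhds.2 fun j => ?_
  simp only [diagonal_mul_mul_diagonal_apply, Matrix.zero_apply]
  by_cases hij : R i j
  · have hscale : Tendsto (fun x => (d x i)⁻¹ * d x j) l (𝓝 0) := by
      rw [tendsto_zero_iff_norm_tendsto_zero]
      refine (hd i j hij).inv_tendsto_atTop.congr fun x => ?_
      rw [Pi.inv_apply, ← norm_inv, inv_div, div_eq_inv_mul]
    have hentry := tendsto_pi_nhds.1 (tendsto_pi_nhds.1 hN i) j
    simpa [mul_right_comm] using hscale.mul hentry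
  · simpa [hsupp _ i j hij] using tendsto_const_nhds

lemma tendsto_diagonal_conj_one (R : ι → ι → Prop) (d : β → ι → K) (hd₀ : ∀ x i, d x i ≠ 0)
    (hd : ∀ i j, R i j → Tendsto (fun x => ‖d x i / d x j‖) l atTop)
    {M : β → Matrix ι ι K} {L : Matrix ι ι K} (hM : Tendsto M l (𝓝 L))
    (hsupp : ∀ x i j, ¬ R i j → (M x - 1) i j = 0) :
    Tendsto (fun x => diagonal (fun i => (d x i)⁻¹) * M x * diagonal (d x)) l (𝓝 1) := by
  have hconj : ∀ x, diagonal (fun i => (d x i)⁻¹) * M x * diagonal (d x) =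
      1 + diagonal (fun i => (d x i)⁻¹) * (M x - 1) * diagonal (d x) := fun x => by
    rw [mul_sub, sub_mul, mul_one, diagonal_inv_mul_diagonal (hd₀ x), add_sub_cancel]
  simpa [hconj] using
    tendsto_const_nhds.add (tendsto_diagonal_conj_zero R d hd (hM.sub_const 1) hsupp)

end Conjugation

section Blocks

variable {K : Type*} {n : ℕ} {b : Fin n → ℕ}

lemma IsStrictUpperUnip.sub_one_apply [Ring K] {M : Matrix (Fin n) (Fin n) K}
    (hM : IsStrictUpperUnip b M) {i j : Fin n} (hij : ¬ b i < b j) : (M - 1) i j = 0 := by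
  obtain ⟨N, hN, rfl⟩ := hM
  simp [hN i j hij]

lemma IsStrictLowerUnip.sub_one_apply [Ring K] {M : Matrix (Fin n) (Fin n) K}
    (hM : IsStrictLowerUnip b M) {i j : Fin n} (hij : ¬ b j < b i) : (M - 1) i j = 0 := by
  obtain ⟨N, hN, rfl⟩ := hM
  simp [hN i j hij]

lemma IsBlockDiag.commute_diagonal [CommSemiring K] {M : Matrix (Fin n) (Fin n) K}
    (hM : IsBlockDiag b M) {d : Fin n → K} (hd : ∀ i j, b i = b j → d i = d j) :
    Commute (diagonal d) M := by
  ext i j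
  rw [diagonal_mul, mul_diagonal]
  by_cases hij : b i = b j
  · rw [hd i j hij, mul_comm]
  · rw [hM i j hij, mul_zero, zero_mul]

end Blocks

theorem stmt13_general {K : Type*} [NormedField K] {n : ℕ} (b : Fin n → ℕ)
    (d : ℕ → Fin n → Kˣ)
    (heq : ∀ k : ℕ, ∀ i j, b i = b j → d k i = d k j)
    (hinf : ∀ i j, b i < b j →
      Tendsto (fun k : ℕ => ‖(d k i : K) / (d k j : K)‖) atTop atTop)
    (r u n' : Matrix (Fin n) (Fin n) K)
    (useq rseq nseq : ℕ → Matrix (Fin n) (Fin n) K)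
    (huseq : ∀ k, IsStrictLowerUnip b (useq k)) (huconv : Tendsto useq atTop (nhds u))
    (hrseq : ∀ k, IsBlockDiag b (rseq k)) (hrconv : Tendsto rseq atTop (nhds r))
    (hnseq : ∀ k, IsStrictUpperUnip b (nseq k)) (hnconv : Tendsto nseq atTop (nhds n')) :
    Tendsto
      (fun k : ℕ => useq k * rseq k *
        ((Matrix.diagonal fun i => ((d k i : K))⁻¹) * nseq k *
          Matrix.diagonal (fun i => (d k i : K))))
      atTop (nhds (u * r)) ∧
    Tendsto
      (fun k : ℕ =>
        (Matrix.diagonal fun i => (d k i : K)) *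
          (useq k * rseq k *
            ((Matrix.diagonal fun i => ((d k i : K))⁻¹) * nseq k *
              Matrix.diagonal (fun i => (d k i : K)))) *
          Matrix.diagonal (fun i => ((d k i : K))⁻¹))
      atTop (nhds (r * n')) := by
  have hd₀ : ∀ k i, (d k i : K) ≠ 0 := fun k i => (d k i).ne_zero
  have hn_conj := tendsto_diagonal_conj_one (fun i j => b i < b j) (fun k i => (d k i : K))
    hd₀ hinf hnconv fun k _ _ => (hnseq k).sub_one_apply
  have hu_conj := tendsto_diagonal_conj_one (fun i j => b j < b i) (fun k i => (d k i : K)⁻¹)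
    (fun k i => inv_ne_zero (hd₀ k i))
    (fun i j hij => by simpa only [inv_div_inv] using hinf j i hij) huconv
    fun k _ _ => (huseq k).sub_one_apply
  simp only [inv_inv] at hu_conj
  refine ⟨by simpa using (huconv.mul hrconv).mul hn_conj, ?_⟩
  have hsplit := fun k => conj_mul_mul_conj_eq_of_commute (diagonal_mul_diagonal_inv (hd₀ k))
    (diagonal_inv_mul_diagonal (hd₀ k))
    ((hrseq k).commute_diagonal fun i j hij => congrArg Units.val (heq k i j hij))
    (useq k) (nseq k)
  simpa [hsplit] using hu_conj.mul (hrconv.mul hnconv)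

/-- With `(d_k)` as before, if `u_k → u` (strictly-lower unipotent),
`r_k → r` (block diagonal), `n'_k → n'` (strictly-upper unipotent), and
`g_k = u_k r_k (a_k⁻¹ n'_k a_k)`, then `g_k → u r` and `a_k g_k a_k⁻¹ → r n'` entrywise. -/
theorem stmt13 {K : Type*} [NormedField K] {n : ℕ} (b : Fin n → ℕ)
    (d : ℕ → Fin n → Kˣ)
    (heq : ∀ k : ℕ, ∀ i j, b i = b j → d k i = d k j)
    (hinf : ∀ i j, b i < b j →
      Tendsto (fun k : ℕ => ‖(d k i : K) / (d k j : K)‖) atTop atTop)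
    (r u n' : Matrix (Fin n) (Fin n) K)
    (hr : IsBlockDiag b r) (hu : IsStrictLowerUnip b u) (hn' : IsStrictUpperUnip b n')
    (useq rseq nseq : ℕ → Matrix (Fin n) (Fin n) K)
    (huseq : ∀ k, IsStrictLowerUnip b (useq k)) (huconv : Tendsto useq atTop (nhds u))
    (hrseq : ∀ k, IsBlockDiag b (rseq k)) (hrconv : Tendsto rseq atTop (nhds r))
    (hnseq : ∀ k, IsStrictUpperUnip b (nseq k)) (hnconv : Tendsto nseq atTop (nhds n')) :
    Tendsto
      (fun k : ℕ => useq k * rseq k *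
        ((Matrix.diagonal fun i => ((d k i : K))⁻¹) * nseq k *
          Matrix.diagonal (fun i => (d k i : K))))
      atTop (nhds (u * r)) ∧
    Tendsto
      (fun k : ℕ =>
        (Matrix.diagonal fun i => (d k i : K)) *
          (useq k * rseq k *
            ((Matrix.diagonal fun i => ((d k i : K))⁻¹) * nseq k *
              Matrix.diagonal (fun i => (d k i : K)))) *
          Matrix.diagonal (fun i => ((d k i : K))⁻¹))
      atTop (nhds (r * n')) :=
  stmt13_general b d heq hinf r u n' useq rseq nseq huseq huconv hrseq hrconv hnseq hnconv
end

section
/- Let K be a nontrivially normed field which is a proper metric space (equivalently, locally compact; these are exactly the local fields), Γ a finitely generated group, n : ℕ, and ρ : Γ →* GL_n(K) a group homomorphism. Then there exist a semisimple group homomorphism σ : Γ →* GL_n(K) and a sequence (g_k) in GL_n(K) such that for every γ ∈ Γ, the matrices g_k · ρ(γ) · g_k⁻¹ converge entrywise to σ(γ); that is, the closure of the conjugation orbit of ρ contains a semisimple representation. -/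
open Filter Topology
open scoped Matrix

/-- A representation `ρ : Γ →* GL_n(K)` is semisimple if every `ρ`-invariant subspace of
`K^n` admits a `ρ`-invariant complement. -/
def IsSemisimpleRep {K : Type*} [Field K] {n : ℕ} {Γ : Type*} [Group Γ]
    (ρ : Γ →* Matrix.GeneralLinearGroup (Fin n) K) : Prop :=
  ∀ W : Submodule K (Fin n → K),
    (∀ γ : Γ, ∀ w ∈ W, (ρ γ : Matrix (Fin n) (Fin n) K) *ᵥ w ∈ W) →
    ∃ W' : Submodule K (Fin n → K),
      (∀ γ : Γ, ∀ w ∈ W', (ρ γ : Matrix (Fin n) (Fin n) K) *ᵥ w ∈ W') ∧ IsCompl W W'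

/-!
Choose a composition series `0 = F₀ ⋖ F₁ ⋖ ⋯ ⋖ F_N = Kⁿ` of `ρ`-invariant subspaces and complete
orthogonal idempotents `e₀, …, e_{N-1}` adapted to it (`eᵢ` projects onto a complement of `Fᵢ`
in `Fᵢ₊₁`), so that every `ρ(γ)` is block upper triangular. Conjugating by `g_k = ∑ᵢ c^{ik} eᵢ`
with `‖c‖ > 1` multiplies the block `(i, j)` by `c^{(i-j)k}`, which tends to `0` above the
diagonal, so `g_k ρ(γ) g_k⁻¹` tends to the block-diagonal part `σ(γ) = ∑ᵢ eᵢ ρ(γ) eᵢ`. The blocks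
of `σ` are the composition factors of `ρ`, which are irreducible, so `σ` is semisimple.
-/

section BlockDecomposition

variable {A ι : Type*} [Ring A] {e : ι → A}

def IsBlockUpper [LT ι] (e : ι → A) (x : A) : Prop :=
  ∀ i j, j < i → e i * x * e j = 0

def blockDiag [Fintype ι] (e : ι → A) (x : A) : A :=
  ∑ i, e i * x * e i

lemma IsBlockUpper.map [LT ι] {B : Type*} [Ring B] (f : A →+* B) {x : A}
    (hx : IsBlockUpper e x) : IsBlockUpper (f ∘ e) (f x) := fun i j hij => by
  simp only [Function.comp_apply, ← map_mul, hx i j hij, map_zero]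

lemma map_blockDiag [Fintype ι] {B : Type*} [Ring B] (f : A →+* B) (x : A) :
    f (blockDiag e x) = blockDiag (f ∘ e) (f x) := by
  simp only [blockDiag, map_sum, map_mul, Function.comp_apply]

namespace CompleteOrthogonalIdempotents

variable [Fintype ι] (he : CompleteOrthogonalIdempotents e)
include he

lemma blockDiag_mul_apply (x : A) (i : ι) : blockDiag e x * e i = e i * x * e i := by
  classical
  simp only [blockDiag, Finset.sum_mul, mul_assoc, he.mul_eq, mul_ite, mul_zero,
    Finset.sum_ite_eq', Finset.mem_univ, if_true]

lemma apply_mul_blockDiag (x : A) (i : ι) : e i * blockDiag e x = e i * x * e i := by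
  classical
  simp only [blockDiag, Finset.mul_sum, ← mul_assoc, he.mul_eq, ite_mul, zero_mul,
    Finset.sum_ite_eq, Finset.mem_univ, if_true]

lemma blockDiag_one : blockDiag e 1 = 1 := by
  simp only [blockDiag, mul_one, (he.idem _).eq, he.complete]

lemma blockDiag_mul [LinearOrder ι] {x y : A} (hx : IsBlockUpper e x) (hy : IsBlockUpper e y) :
    blockDiag e x * blockDiag e y = blockDiag e (x * y) := by
  have cross : ∀ i j, j ≠ i → e i * x * e j * y * e i = 0 := by
    intro i j hji
    rcases hji.lt_or_gt with hlt | hgt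
    · rw [hx i j hlt, zero_mul, zero_mul]
    · rw [mul_assoc (e i * x), mul_assoc (e i * x), hy j i hgt, mul_zero]
  have diag : ∀ i, e i * (x * y) * e i = e i * x * e i * y * e i := fun i => calc
    e i * (x * y) * e i = e i * x * (∑ j, e j) * y * e i := by
        rw [he.complete, mul_one, mul_assoc (e i) x y]
    _ = ∑ j, e i * x * e j * y * e i := by
        rw [Finset.mul_sum, Finset.sum_mul, Finset.sum_mul]
    _ = e i * x * e i * y * e i :=
        Finset.sum_eq_single i (fun j _ hji => cross i j hji) (by simp)
  calc blockDiag e x * blockDiag e y = ∑ i, e i * x * (e i * blockDiag e y) := by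
        simp only [blockDiag, Finset.sum_mul, mul_assoc]
    _ = blockDiag e (x * y) := Finset.sum_congr rfl fun i _ => by
        rw [apply_mul_blockDiag he, diag]
        simp only [mul_assoc]

end CompleteOrthogonalIdempotents

def MonoidHom.blockDiag {G : Type*} [Monoid G] [Fintype ι] [LinearOrder ι] (ρ : G →* A)
    (he : CompleteOrthogonalIdempotents e) (hρ : ∀ g, IsBlockUpper e (ρ g)) : G →* A where
  toFun g := _root_.blockDiag e (ρ g)
  map_one' := by rw [map_one, he.blockDiag_one]
  map_mul' g h := by rw [map_mul, he.blockDiag_mul (hρ g) (hρ h)]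

end BlockDecomposition

section DiagonalScaling

variable {K A ι : Type*} [Ring A] [Fintype ι] {e : ι → A}

def diagScale [CommSemiring K] [Algebra K A] (e : ι → A) (t : ι → K) : A :=
  ∑ i, t i • e i

lemma diagScale_mul_mul_diagScale [CommSemiring K] [Algebra K A] (s t : ι → K) (x : A) :
    diagScale e s * x * diagScale e t = ∑ i, ∑ j, (s i * t j) • (e i * x * e j) := by
  simp only [diagScale, Finset.sum_mul]
  simp only [Finset.mul_sum]
  refine Finset.sum_congr rfl fun i _ => Finset.sum_congr rfl fun j _ => ?_
  rw [smul_mul_assoc, smul_mul_assoc, mul_smul_comm, smul_smul]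

namespace CompleteOrthogonalIdempotents

variable [Field K] [Algebra K A] (he : CompleteOrthogonalIdempotents e)
include he

lemma diagScale_mul_diagScale (s t : ι → K) :
    diagScale e s * diagScale e t = diagScale e (s * t) := by
  classical
  rw [diagScale, diagScale, Finset.sum_mul_sum]
  refine Finset.sum_congr rfl fun i _ => ?_
  simp only [smul_mul_smul_comm, he.mul_eq, smul_ite, smul_zero, Finset.sum_ite_eq,
    Finset.mem_univ, if_true, Pi.mul_apply]

lemma diagScale_one : diagScale e (1 : ι → K) = 1 := by
  simp only [diagScale, Pi.one_apply, one_smul, he.complete]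

def diagScaleUnit (t : ι → K) (ht : ∀ i, t i ≠ 0) : Aˣ where
  val := diagScale e t
  inv := diagScale e t⁻¹
  val_inv := by
    rw [he.diagScale_mul_diagScale, ← he.diagScale_one (K := K)]
    exact congrArg _ (funext fun i => mul_inv_cancel₀ (ht i))
  inv_val := by
    rw [he.diagScale_mul_diagScale, ← he.diagScale_one (K := K)]
    exact congrArg _ (funext fun i => inv_mul_cancel₀ (ht i))

end CompleteOrthogonalIdempotents

theorem tendsto_diagScale_mul_mul_diagScale_inv [NormedField K] [Algebra K A] [LinearOrder ι]
    [TopologicalSpace A] [ContinuousAdd A] [ContinuousSMul K A]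
    {c : K} (hc : 1 < ‖c‖) {w : ι → ℕ} (hw : StrictMono w) {x : A} (hx : IsBlockUpper e x) :
    Tendsto (fun k : ℕ => diagScale e (fun i => (c ^ w i) ^ k) * x *
      diagScale e (fun i => (c ^ w i) ^ k)⁻¹) atTop (𝓝 (blockDiag e x)) := by
  classical
  have hc0 : c ≠ 0 := norm_pos_iff.1 (one_pos.trans hc)
  have hblock : blockDiag e x = ∑ i, ∑ j, if i = j then e i * x * e j else 0 := by
    simp only [blockDiag, Finset.sum_ite_eq, Finset.mem_univ, if_true]
  have hcoeff : ∀ i j k, (c ^ w i) ^ k * ((c ^ w j) ^ k)⁻¹ = (c ^ w i * (c ^ w j)⁻¹) ^ k :=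
    fun i j k => by rw [mul_pow, inv_pow]
  simp only [diagScale_mul_mul_diagScale, hblock, Pi.inv_apply, hcoeff]
  refine tendsto_finsetSum _ fun i _ => tendsto_finsetSum _ fun j _ => ?_
  rcases lt_trichotomy i j with hij | rfl | hji
  · have hlt : ‖c ^ w i * (c ^ w j)⁻¹‖ < 1 := by
      rw [norm_mul, norm_inv, norm_pow, norm_pow, ← div_eq_mul_inv,
        div_lt_one (by positivity)]
      exact pow_lt_pow_right₀ hc (hw hij)
    simpa only [if_neg hij.ne, zero_smul] using
      (tendsto_pow_atTop_nhds_zero_of_norm_lt_one hlt).smul_const (e i * x * e j)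
  · simp only [mul_inv_cancel₀ (pow_ne_zero _ hc0), one_pow, one_smul, if_true]
    exact tendsto_const_nhds
  · simp only [hx i j hji, smul_zero, if_neg hji.ne']
    exact tendsto_const_nhds

end DiagonalScaling

theorem Monotone.exists_antitone_isCompl {α : Type*} [Lattice α] [BoundedOrder α]
    [IsModularLattice α] [ComplementedLattice α] {F : ℕ → α} (hF : Monotone F) {N : ℕ}
    (hN : F N = ⊤) :
    ∃ D : ℕ → α, Antitone D ∧ ∀ i, IsCompl (F i) (D i) := by
  induction N generalizing F with
  | zero =>
    have htop : ∀ i, F i = ⊤ := fun i => top_unique (hN ▸ hF (Nat.zero_le i))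
    exact ⟨fun _ => ⊥, antitone_const, fun i => htop i ▸ isCompl_top_bot⟩
  | succ N ih =>
    obtain ⟨D, hD, hFD⟩ := ih (F := fun i => F (i + 1)) (fun a b h => hF (by omega)) hN
    obtain ⟨E, hE⟩ := exists_isCompl (F 0)
    -- `E ⊓ F 1` complements `F 0` inside `F 1`, and `D 0` complements `F 1`.
    have hF01 : F 0 ≤ F 1 := hF zero_le_one
    have hC : F 0 ⊔ E ⊓ F 1 = F 1 := by
      rw [← sup_inf_assoc_of_le E hF01, hE.sup_eq_top, top_inf_eq]
    refine ⟨fun i => Nat.casesOn i (E ⊓ F 1 ⊔ D 0) D, antitone_nat_of_succ_le ?_, ?_⟩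
    · rintro (_ | i)
      · exact le_sup_right
      · exact hD (Nat.le_succ i)
    · rintro (_ | i)
      · refine ⟨disjoint_iff_inf_le.2 ?_, codisjoint_iff.2 ?_⟩
        · calc F 0 ⊓ (E ⊓ F 1 ⊔ D 0) ≤ F 0 ⊓ ((E ⊓ F 1 ⊔ D 0) ⊓ F 1) :=
                le_inf inf_le_left (le_inf inf_le_right (inf_le_left.trans hF01))
            _ = F 0 ⊓ (E ⊓ F 1) := by
                rw [sup_inf_assoc_of_le _ inf_le_right, inf_comm (D 0), (hFD 0).inf_eq_bot,
                  sup_bot_eq]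
            _ ≤ F 0 ⊓ E := inf_le_inf_left _ inf_le_left
            _ = ⊥ := hE.inf_eq_bot
        · show F 0 ⊔ (E ⊓ F 1 ⊔ D 0) = ⊤
          rw [← sup_assoc, hC]
          exact (hFD 0).sup_eq_top
      · exact hFD i

theorem completeOrthogonalIdempotents_sub_of_chain {R : Type*} [Ring R] {P : ℕ → R} {N : ℕ}
    (hP : ∀ i j, i ≤ j → P i * P j = P i ∧ P j * P i = P i) (h0 : P 0 = 0) (hN : P N = 1) :
    CompleteOrthogonalIdempotents (fun i : Fin N => P (i + 1) - P i) := by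
  refine CompleteOrthogonalIdempotents.iff_ortho_complete.2 ⟨fun i j hij => ?_, ?_⟩
  · simp only [sub_mul, mul_sub]
    rcases (Fin.val_injective.ne hij).lt_or_gt with h | h
    · rw [(hP _ _ h).1, (hP _ _ h.le).1, (hP _ _ (by omega)).1, (hP _ _ (by omega)).1]
      abel
    · rw [(hP _ _ h).2, (hP _ _ h.le).2, (hP _ _ (by omega)).2, (hP _ _ (by omega)).2]
      abel
  · rw [Fin.sum_univ_eq_sum_range (fun i => P (i + 1) - P i), Finset.sum_range_sub, hN, h0,
      sub_zero]

section Flags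

variable {K V : Type*} [DivisionRing K] [AddCommGroup V] [Module K V]

open LinearMap

theorem exists_completeOrthogonalIdempotents_of_flag {F : ℕ → Submodule K V} (hF : Monotone F)
    (hF0 : F 0 = ⊥) {N : ℕ} (hN : F N = ⊤) :
    ∃ e : Fin N → Module.End K V, CompleteOrthogonalIdempotents e ∧
      ∀ (i : Fin N) (j : ℕ), ((i : ℕ) < j → range (e i) ≤ F j) ∧ (j ≤ i → F j ≤ ker (e i)) := by
  obtain ⟨D, hD, hFD⟩ := hF.exists_antitone_isCompl hN
  let P : ℕ → Module.End K V := fun i => (F i).projection (D i) (hFD i)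
  have hPF : ∀ i v, P i v ∈ F i := fun i v => Submodule.projection_apply_mem _ v
  have hPfix : ∀ {i v}, v ∈ F i → P i v = v := fun hv =>
    Submodule.projection_apply_of_mem_left _ hv
  have hchain : ∀ i j, i ≤ j → P i * P j = P i ∧ P j * P i = P i := fun i j hij => by
    refine ⟨LinearMap.ext fun v => ?_, LinearMap.ext fun v => hPfix (hF hij (hPF i v))⟩
    have hker : P i (v - P j v) = 0 :=
      (Submodule.projection_apply_eq_zero_iff _).2 (hD hij (Submodule.sub_projection_mem _ v))
    rwa [map_sub, sub_eq_zero, eq_comm] at hker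
  have h0 : P 0 = 0 := LinearMap.ext fun v => by
    simpa [hF0] using hPF 0 v
  have hN1 : P N = 1 := LinearMap.ext fun v => hPfix (hN ▸ Submodule.mem_top)
  refine ⟨_, completeOrthogonalIdempotents_sub_of_chain hchain h0 hN1, fun i j => ⟨?_, ?_⟩⟩
  · rintro hij _ ⟨v, rfl⟩
    exact hF hij (sub_mem (hPF _ v) (hF (Nat.le_succ i) (hPF _ v)))
  · intro hji v hv
    rw [LinearMap.mem_ker, LinearMap.sub_apply, hPfix (hF (hji.trans (Nat.le_succ i)) hv),
      hPfix (hF hji hv), sub_self]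

theorem isBlockUpper_of_flag {N : ℕ} {e : Fin N → Module.End K V} {F : ℕ → Submodule K V}
    (hflag : ∀ (i : Fin N) (j : ℕ), ((i : ℕ) < j → range (e i) ≤ F j) ∧ (j ≤ i → F j ≤ ker (e i)))
    {f : Module.End K V} (hf : ∀ j, F j ∈ f.invtSubmodule) : IsBlockUpper e f := by
  intro i j hji
  ext v
  have hv : e j v ∈ F (j + 1) := (hflag j (j + 1)).1 (Nat.lt_succ_self _) ⟨v, rfl⟩
  exact (hflag i (j + 1)).2 hji (hf _ hv)

theorem CompleteOrthogonalIdempotents.iSup_range_eq_top {ι : Type*} [Fintype ι]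
    {e : ι → Module.End K V} (he : CompleteOrthogonalIdempotents e) : ⨆ i, range (e i) = ⊤ := by
  refine eq_top_iff.2 fun v _ => ?_
  have hv : (∑ i, e i) v ∈ ⨆ i, range (e i) := by
    rw [LinearMap.sum_apply]
    exact Submodule.sum_mem _ fun i _ => Submodule.mem_iSup_of_mem i ⟨v, rfl⟩
  rwa [he.complete, Module.End.one_apply] at hv

end Flags

namespace Representation

variable {K G V : Type*} [Field K] [Monoid G] [AddCommGroup V] [Module K V]
  (ρ : Representation K G V)

lemma mem_invtSubmodule_iff_forall_mem {p : Submodule K V} :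
    p ∈ ρ.invtSubmodule ↔ ∀ g, ∀ v ∈ p, ρ g v ∈ p :=
  ρ.mem_invtSubmodule

theorem exists_monotone_covBy_flag [FiniteDimensional K V] :
    ∃ (F : ℕ → ρ.invtSubmodule) (N : ℕ), Monotone F ∧ F 0 = ⊥ ∧ F N = ⊤ ∧
      ∀ i < N, F i ⋖ F (i + 1) := by
  obtain ⟨a, ha0, N, haN, hcov⟩ := exists_covBy_seq_of_wellFoundedLT_wellFoundedGT ρ.invtSubmodule
  refine ⟨fun i => a (min i N), N, monotone_nat_of_le_succ fun i => ?_, by simpa using ha0.eq_bot,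
    by simpa using haN.eq_top, fun i hi => ?_⟩
  · rcases lt_or_ge i N with hi | hi
    · simpa [min_eq_left hi.le, min_eq_left (Nat.succ_le_of_lt hi)] using (hcov i hi).le
    · simp [min_eq_right hi, min_eq_right (hi.trans (Nat.le_succ i))]
  · simpa [min_eq_left hi.le, min_eq_left (Nat.succ_le_of_lt hi)] using hcov i hi

theorem complementedLattice_invtSubmodule {ι : Type*} (C : ι → ρ.invtSubmodule)
    (hC : ∀ i U, U ≤ C i → U = ⊥ ∨ U = C i) (htop : ⨆ i, (C i : Submodule K V) = ⊤) :
    ComplementedLattice ρ.invtSubmodule := by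
  refine ρ.mapSubmodule.complementedLattice_iff.2 (complementedLattice_of_sSup_atoms_eq_top ?_)
  have hle : ∀ i, ρ.mapSubmodule (C i) ≤ sSup {a | IsAtom a} := fun i => by
    by_cases hi : C i = ⊥
    · rw [hi, OrderIso.map_bot]
      exact bot_le
    · exact le_sSup ((ρ.mapSubmodule.isAtom_iff _).2
        ⟨hi, fun U hU => (hC i U hU.le).resolve_right hU.ne⟩)
  refine eq_top_iff.2 fun x _ => ?_
  have hx : ρ.asModuleEquiv x ∈ ⨆ i, (C i : Submodule K V) := htop ▸ Submodule.mem_top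
  simpa using Submodule.iSup_induction _ (motive := fun v => ρ.asModuleEquiv.symm v ∈ _) hx
    (fun i v hv => hle i ⟨v, hv, rfl⟩) (by simp) (fun v w hv hw => by simpa using add_mem hv hw)

theorem exists_isCompl_of_mem_invtSubmodule [ComplementedLattice ρ.invtSubmodule]
    {W : Submodule K V} (hW : W ∈ ρ.invtSubmodule) : ∃ W' ∈ ρ.invtSubmodule, IsCompl W W' := by
  obtain ⟨W', hW'⟩ := exists_isCompl (⟨W, hW⟩ : ρ.invtSubmodule)
  exact ⟨W', W'.2, disjoint_iff.2 (congrArg Subtype.val (disjoint_iff.1 hW'.disjoint)),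
    codisjoint_iff.2 (congrArg Subtype.val (codisjoint_iff.1 hW'.codisjoint))⟩

variable {N : ℕ} {e : Fin N → Module.End K V} (he : CompleteOrthogonalIdempotents e)
  (hρ : ∀ g, IsBlockUpper e (ρ g))

open LinearMap

lemma blockDiag_apply_of_mem_range {i : Fin N} {u : V} (hu : u ∈ range (e i)) (g : G) :
    MonoidHom.blockDiag ρ he hρ g u = e i (ρ g u) := by
  obtain ⟨w, rfl⟩ := hu
  have h := congrArg (· w) (he.blockDiag_mul_apply (ρ g) i)
  simp only [Module.End.mul_apply] at h
  exact h

lemma sup_mem_invtSubmodule_of_le_range {i : Fin N} {F : Submodule K V} (hF : F ∈ ρ.invtSubmodule)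
    (hlow : ∀ j < i, range (e j) ≤ F) {U : Submodule K V}
    (hU : U ∈ invtSubmodule (MonoidHom.blockDiag ρ he hρ))
    (hUi : U ≤ range (e i)) : F ⊔ U ∈ ρ.invtSubmodule := by
  rw [mem_invtSubmodule_iff_forall_mem] at hF hU ⊢
  intro g v hv
  obtain ⟨a, ha, u, hu, rfl⟩ := Submodule.mem_sup.1 hv
  rw [map_add]
  refine add_mem (Submodule.mem_sup_left (hF g a ha)) ?_
  have hdecomp : ρ g u = ∑ j, e j (ρ g u) := by
    rw [← LinearMap.sum_apply, he.complete, Module.End.one_apply]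
  rw [hdecomp]
  refine Submodule.sum_mem _ fun j _ => ?_
  rcases lt_trichotomy j i with hji | rfl | hij
  · exact Submodule.mem_sup_left (hlow j hji ⟨_, rfl⟩)
  · rw [← blockDiag_apply_of_mem_range ρ he hρ (hUi hu)]
    exact Submodule.mem_sup_right (hU g u hu)
  · obtain ⟨w, rfl⟩ := hUi hu
    have h := congrArg (· w) (hρ g j i hij)
    simp only [Module.End.mul_apply, LinearMap.zero_apply] at h
    rw [h]
    exact zero_mem _

theorem eq_bot_or_eq_range_of_covBy {i : Fin N} {F F' : ρ.invtSubmodule} (hcov : F ⋖ F')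
    (hlow : ∀ j < i, range (e j) ≤ F) (hker : (F : Submodule K V) ≤ ker (e i))
    (hrange : range (e i) ≤ F') {U : Submodule K V}
    (hU : U ∈ invtSubmodule (MonoidHom.blockDiag ρ he hρ)) (hUi : U ≤ range (e i)) :
    U = ⊥ ∨ U = range (e i) := by
  have hfix : ∀ {v}, v ∈ range (e i) → e i v = v := by
    rintro _ ⟨w, rfl⟩
    rw [← Module.End.mul_apply, (he.idem i).eq]
  let X : ρ.invtSubmodule := ⟨F ⊔ U, sup_mem_invtSubmodule_of_le_range ρ he hρ F.2 hlow hU hUi⟩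
  have hFX : F ≤ X := Subtype.coe_le_coe.1 le_sup_left
  have hXF' : X ≤ F' :=
    Subtype.coe_le_coe.1 (sup_le (Subtype.coe_le_coe.2 hcov.le) (hUi.trans hrange))
  rcases hcov.eq_or_eq hFX hXF' with hX | hX
  · left
    refine eq_bot_iff.2 fun u hu => ?_
    have huF : u ∈ (F : Submodule K V) := by
      rw [← hX]
      exact Submodule.mem_sup_right hu
    rw [Submodule.mem_bot, ← hfix (hUi hu)]
    exact hker huF
  · right
    refine le_antisymm hUi fun v hv => ?_
    have hvX : v ∈ (F : Submodule K V) ⊔ U := by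
      rw [show (F : Submodule K V) ⊔ U = F' from congrArg Subtype.val hX]
      exact hrange hv
    obtain ⟨a, ha, u, hu, rfl⟩ := Submodule.mem_sup.1 hvX
    rw [← hfix hv, map_add, hker ha, zero_add, hfix (hUi hu)]
    exact hu

theorem exists_blockDiag_complementedLattice [FiniteDimensional K V] :
    ∃ (N : ℕ) (e : Fin N → Module.End K V) (he : CompleteOrthogonalIdempotents e)
      (hρ : ∀ g, IsBlockUpper e (ρ g)),
      ComplementedLattice (invtSubmodule (MonoidHom.blockDiag ρ he hρ)) := by
  obtain ⟨F, N, hFm, hF0, hFN, hcov⟩ := ρ.exists_monotone_covBy_flag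
  obtain ⟨e, he, hflag⟩ := exists_completeOrthogonalIdempotents_of_flag
    (F := fun j => (F j : Submodule K V)) (N := N) (fun a b h => hFm h) (by simp [hF0])
    (by simp [hFN])
  have hρ : ∀ g, IsBlockUpper e (ρ g) := fun g =>
    isBlockUpper_of_flag hflag fun j => ρ.mem_invtSubmodule.1 (F j).2 g
  refine ⟨N, e, he, hρ, complementedLattice_invtSubmodule (MonoidHom.blockDiag ρ he hρ)
    (fun i => ⟨LinearMap.range (e i), ?_⟩) (fun i U hU => ?_) he.iSup_range_eq_top⟩
  · exact (mem_invtSubmodule_iff_forall_mem _).2 fun g u hu =>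
      blockDiag_apply_of_mem_range ρ he hρ hu g ▸ ⟨_, rfl⟩
  · exact (ρ.eq_bot_or_eq_range_of_covBy he hρ (hcov i i.2) (fun j hj => (hflag j i).1 hj)
      ((hflag i i).2 le_rfl) ((hflag i (i + 1)).1 (Nat.lt_succ_self _)) U.2 hU).imp
      Subtype.ext Subtype.ext

end Representation

section GeneralLinearGroup

variable {K Γ : Type*} [Field K] [Group Γ] {n : ℕ}

def MonoidHom.toRepresentation (ρ : Γ →* Matrix.GeneralLinearGroup (Fin n) K) :
    Representation K Γ (Fin n → K) :=
  Matrix.toLinAlgEquiv'.toMonoidHom.comp ((Units.coeHom _).comp ρ)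

lemma MonoidHom.toRepresentation_apply (ρ : Γ →* Matrix.GeneralLinearGroup (Fin n) K) (γ : Γ)
    (v : Fin n → K) : ρ.toRepresentation γ v = (ρ γ : Matrix (Fin n) (Fin n) K) *ᵥ v :=
  Matrix.toLinAlgEquiv'_apply _ v

theorem isSemisimpleRep_of_complementedLattice (σ : Γ →* Matrix.GeneralLinearGroup (Fin n) K)
    [ComplementedLattice σ.toRepresentation.invtSubmodule] : IsSemisimpleRep σ := by
  intro W hW
  obtain ⟨W', hW', hcompl⟩ := σ.toRepresentation.exists_isCompl_of_mem_invtSubmodule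
    ((Representation.mem_invtSubmodule_iff_forall_mem _).2 fun γ w hw => by
      simpa only [MonoidHom.toRepresentation_apply] using hW γ w hw)
  refine ⟨W', fun γ w hw => ?_, hcompl⟩
  simpa only [MonoidHom.toRepresentation_apply] using
    (Representation.mem_invtSubmodule_iff_forall_mem _).1 hW' γ w hw

end GeneralLinearGroup

theorem stmt14_general {K : Type*} [NontriviallyNormedField K]
    {Γ : Type*} [Group Γ] {n : ℕ}
    (ρ : Γ →* Matrix.GeneralLinearGroup (Fin n) K) :
    ∃ σ : Γ →* Matrix.GeneralLinearGroup (Fin n) K,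
      IsSemisimpleRep σ ∧
      ∃ g : ℕ → Matrix.GeneralLinearGroup (Fin n) K,
        ∀ γ : Γ,
          Tendsto
            (fun k : ℕ =>
              ((g k * ρ γ * (g k)⁻¹ : Matrix.GeneralLinearGroup (Fin n) K) :
                Matrix (Fin n) (Fin n) K))
            atTop (nhds ((σ γ : Matrix (Fin n) (Fin n) K))) := by
  obtain ⟨c, hc⟩ := NormedField.exists_one_lt_norm K
  have hc0 : c ≠ 0 := norm_pos_iff.1 (one_pos.trans hc)
  obtain ⟨N, e, he, hρ, hσ⟩ := ρ.toRepresentation.exists_blockDiag_complementedLattice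
  let φ := LinearMap.toMatrixAlgEquiv' (R := K) (n := Fin n)
  let σ := (φ.toMonoidHom.comp (MonoidHom.blockDiag _ he hρ)).toHomUnits
  have hσrep : σ.toRepresentation = MonoidHom.blockDiag _ he hρ := by
    ext γ : 1
    exact Matrix.toLinAlgEquiv'_toMatrixAlgEquiv' _
  have hρmat : ∀ γ, φ (ρ.toRepresentation γ) = ρ γ := fun γ =>
    LinearMap.toMatrixAlgEquiv'_toLinAlgEquiv' _
  have : ComplementedLattice σ.toRepresentation.invtSubmodule := hσrep ▸ hσ
  refine ⟨σ, isSemisimpleRep_of_complementedLattice σ,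
    fun k => (he.map φ.toRingHom).diagScaleUnit (fun i => (c ^ (i : ℕ)) ^ k)
      fun i => pow_ne_zero _ (pow_ne_zero _ hc0), fun γ => ?_⟩
  have hx : IsBlockUpper (φ.toRingHom ∘ e) (ρ γ : Matrix (Fin n) (Fin n) K) :=
    hρmat γ ▸ (hρ γ).map φ.toRingHom
  have hσγ : (σ γ : Matrix (Fin n) (Fin n) K) = blockDiag (φ.toRingHom ∘ e) (ρ γ) :=
    hρmat γ ▸ map_blockDiag φ.toRingHom _
  rw [hσγ]
  exact tendsto_diagScale_mul_mul_diagScale_inv hc Fin.val_strictMono hx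

/-- Over a local field `K` (a nontrivially normed field which is a proper
metric space), any representation `ρ : Γ →* GL_n(K)` of a finitely generated group admits a
semisimple representation `σ` in the closure of its conjugation orbit: there is a sequence
`(g_k)` in `GL_n(K)` with `g_k ρ(γ) g_k⁻¹ → σ(γ)` entrywise for every `γ`. -/
theorem stmt14 {K : Type*} [NontriviallyNormedField K] [ProperSpace K]
    {Γ : Type*} [Group Γ] [Group.FG Γ] {n : ℕ}
    (ρ : Γ →* Matrix.GeneralLinearGroup (Fin n) K) :
    ∃ σ : Γ →* Matrix.GeneralLinearGroup (Fin n) K,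
      IsSemisimpleRep σ ∧
      ∃ g : ℕ → Matrix.GeneralLinearGroup (Fin n) K,
        ∀ γ : Γ,
          Tendsto
            (fun k : ℕ =>
              ((g k * ρ γ * (g k)⁻¹ : Matrix.GeneralLinearGroup (Fin n) K) :
                Matrix (Fin n) (Fin n) K))
            atTop (nhds ((σ γ : Matrix (Fin n) (Fin n) K))) :=
  stmt14_general ρ
end

section
/- Let K be a nontrivially normed field which is a proper metric space (a local field), Γ a finitely generated group, n : ℕ, and ρ, ρ' : Γ →* GL_n(K) two semisimple group homomorphisms that are not separated by conjugation: there exist a sequence of group homomorphisms ρ_k : Γ →* GL_n(K) and a sequence (g_k) in GL_n(K) such that for every γ ∈ Γ, ρ_k(γ) → ρ(γ) and g_k · ρ_k(γ) · g_k⁻¹ → ρ'(γ) entrywise. Then ρ and ρ' are conjugate: there exists h ∈ GL_n(K) with ρ'(γ) = h · ρ(γ) · h⁻¹ for all γ ∈ Γ. -/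
/-!
Both representations make `K^n` a semisimple module over the group algebra `K[Γ]`. For
`a ∈ K[Γ]` the matrices `ρ_k(a)` tend to `ρ(a)` while their conjugates `g_k ρ_k(a) g_k⁻¹` tend
to `ρ'(a)`; the characteristic polynomial is a conjugation invariant and, `K` being infinite, is
determined by its values, which depend continuously on the matrix. So every `a` has the same
characteristic polynomial on both modules.

By the Brauer–Nesbitt theorem this forces the modules to be isomorphic. If neither admits a
nonzero map to the other, Jacobson density yields an `a` acting as `1` on the first and as `0`
on the second, and the characteristic polynomials differ at `1`. Otherwise the two modules share
a nonzero direct summand, which cancels from the characteristic polynomials, and we conclude by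
induction on the dimension. Finally, a `K[Γ]`-linear isomorphism of `K^n` with itself is a matrix
conjugating `ρ` into `ρ'`.
-/

open Filter Topology
open scoped Matrix

open Module Polynomial
open scoped MonoidAlgebra

section SemisimpleModule

variable {A M N : Type*} [Ring A] [AddCommGroup M] [Module A M] [AddCommGroup N] [Module A N]

instance IsSemisimpleModule.prod [IsSemisimpleModule A M] [IsSemisimpleModule A N] :
    IsSemisimpleModule A (M × N) := by
  have := IsSemisimpleModule.sup (.range (LinearMap.inl A M N)) (.range (LinearMap.inr A M N))
  rw [LinearMap.sup_range_inl_inr] at this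
  exact this.congr Submodule.topEquiv.symm

theorem exists_nontrivial_linearEquiv_of_ne_zero [IsSemisimpleModule A M] {φ : M →ₗ[A] N}
    (hφ : φ ≠ 0) :
    ∃ (p : Submodule A M) (q : Submodule A N), Nontrivial p ∧ Nonempty (p ≃ₗ[A] q) := by
  obtain ⟨p, hp⟩ := exists_isCompl (LinearMap.ker φ)
  refine ⟨p, LinearMap.range φ, ?_,
    ⟨(Submodule.quotientEquivOfIsCompl _ p hp).symm ≪≫ₗ φ.quotKerEquivRange⟩⟩
  rw [Submodule.nontrivial_iff_ne_bot]
  rintro rfl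
  exact hφ (LinearMap.ker_eq_top.mp (eq_top_of_isCompl_bot hp))

end SemisimpleModule

instance Submodule.finite_of_isScalarTower {K A M : Type*} [Field K] [Ring A] [Algebra K A]
    [AddCommGroup M] [Module K M] [Module A M] [IsScalarTower K A M] [Module.Finite K M]
    (p : Submodule A M) : Module.Finite K p :=
  .of_injective (p.subtype.restrictScalars K) p.injective_subtype

theorem exists_forall_smul_eq_of_commute (K : Type*) {A M : Type*} [Field K] [Ring A]
    [Algebra K A] [AddCommGroup M] [Module K M] [Module A M] [IsScalarTower K A M]
    [Module.Finite K M] [IsSemisimpleModule A M] (f : M →+ M)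
    (hf : ∀ (φ : Module.End A M) (x : M), f (φ x) = φ (f x)) : ∃ r : A, ∀ x, r • x = f x := by
  have : Module.Finite (Module.End A M) M := .of_restrictScalars_finite K _ _
  obtain ⟨r, hr⟩ := Module.Finite.toModuleEnd_moduleEnd_surjective (R := A) (M := M)
    { f with map_smul' := hf }
  exact ⟨r, fun x => congr($hr x)⟩

section BrauerNesbitt

variable (K : Type*) {A : Type*} [Field K] [Ring A] [Algebra K A]

noncomputable def smulCharpoly (a : A) (M : Type*) [AddCommGroup M] [Module K M] [Module A M]
    [IsScalarTower K A M] [Module.Finite K M] : K[X] :=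
  (toModuleEnd K (S := A) M a).charpoly

variable {K}
variable {M N : Type*} [AddCommGroup M] [Module K M] [Module A M] [IsScalarTower K A M]
  [Module.Finite K M] [AddCommGroup N] [Module K N] [Module A N] [IsScalarTower K A N]
  [Module.Finite K N]

theorem smulCharpoly_prod (a : A) :
    smulCharpoly K a (M × N) = smulCharpoly K a M * smulCharpoly K a N := by
  have : toModuleEnd K (S := A) (M × N) a = (toModuleEnd K M a).prodMap (toModuleEnd K N a) := by
    ext <;> rfl
  rw [smulCharpoly, this, LinearMap.charpoly_prodMap]
  rfl

theorem smulCharpoly_congr (e : M ≃ₗ[A] N) (a : A) :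
    smulCharpoly K a M = smulCharpoly K a N := by
  rw [smulCharpoly, smulCharpoly, ← (e.restrictScalars K).charpoly_conj]
  congr 1
  ext x
  simp [LinearEquiv.conj_apply]

theorem natDegree_smulCharpoly (a : A) : (smulCharpoly K a M).natDegree = finrank K M :=
  LinearMap.charpoly_natDegree _

theorem smulCharpoly_monic (a : A) : (smulCharpoly K a M).Monic :=
  LinearMap.charpoly_monic _

theorem exists_hom_ne_zero_of_smulCharpoly_eq [IsSemisimpleModule A M] [IsSemisimpleModule A N]
    [Nontrivial M] (h : ∀ a : A, smulCharpoly K a M = smulCharpoly K a N) :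
    (∃ φ : M →ₗ[A] N, φ ≠ 0) ∨ ∃ φ : N →ₗ[A] M, φ ≠ 0 := by
  by_contra! hzero
  obtain ⟨hMN, hNM⟩ := hzero
  -- With no maps between the factors, the projection onto `M` commutes with `End_A (M × N)`.
  obtain ⟨r, hr⟩ := exists_forall_smul_eq_of_commute K (M := M × N)
    ((LinearMap.inl A M N).toAddMonoidHom.comp (LinearMap.fst A M N).toAddMonoidHom)
    (fun φ ⟨x, y⟩ => by
      have h₁ : (φ (x, 0)).2 = 0 := congr($(hMN (.snd A M N ∘ₗ φ ∘ₗ .inl A M N)) x)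
      have h₂ : (φ (0, y)).1 = 0 := congr($(hNM (.fst A M N ∘ₗ φ ∘ₗ .inr A M N)) y)
      have hxy : φ (x, y) = φ (x, 0) + φ (0, y) := by simp [← map_add]
      show ((φ (x, y)).1, 0) = φ (x, 0)
      ext <;> simp [hxy, h₁, h₂])
  have hM : toModuleEnd K (S := A) M r = 1 := LinearMap.ext fun x => congr($(hr (x, 0)).1)
  have hN : toModuleEnd K (S := A) N r = 0 := LinearMap.ext fun y => congr($(hr (0, y)).2)
  have := congr(($(h r)).eval 1)
  rw [smulCharpoly, smulCharpoly, hM, hN, LinearMap.charpoly_one, LinearMap.charpoly_zero] at this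
  simp [Module.finrank_pos.ne'] at this

theorem nonempty_linearEquiv_of_smulCharpoly_eq [IsSemisimpleModule A M]
    [IsSemisimpleModule A N] (h : ∀ a : A, smulCharpoly K a M = smulCharpoly K a N) :
    Nonempty (M ≃ₗ[A] N) := by
  induction hd : finrank K M using Nat.strong_induction_on generalizing M N with
  | _ d ih =>
  rcases subsingleton_or_nontrivial M with hM | hM
  · have : finrank K N = 0 := by
      rw [← natDegree_smulCharpoly (1 : A), ← h, natDegree_smulCharpoly,
        finrank_zero_of_subsingleton]
    have := Module.finrank_zero_iff.mp this
    exact ⟨.ofSubsingleton M N⟩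
  obtain ⟨p, q, hp, ⟨e⟩⟩ :
      ∃ (p : Submodule A M) (q : Submodule A N), Nontrivial p ∧ Nonempty (p ≃ₗ[A] q) := by
    rcases exists_hom_ne_zero_of_smulCharpoly_eq h with ⟨φ, hφ⟩ | ⟨φ, hφ⟩
    · exact exists_nontrivial_linearEquiv_of_ne_zero hφ
    · obtain ⟨q, p, hq, ⟨e⟩⟩ := exists_nontrivial_linearEquiv_of_ne_zero hφ
      exact ⟨p, q, e.symm.toEquiv.nontrivial, ⟨e.symm⟩⟩
  obtain ⟨p', hpp'⟩ := exists_isCompl p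
  obtain ⟨q', hqq'⟩ := exists_isCompl q
  let eM : M ≃ₗ[A] p × p' := (Submodule.prodEquivOfIsCompl p p' hpp').symm
  let eN : N ≃ₗ[A] p × q' :=
    (Submodule.prodEquivOfIsCompl q q' hqq').symm ≪≫ₗ e.symm.prodCongr (.refl A q')
  have h' (a : A) : smulCharpoly K a p' = smulCharpoly K a q' := by
    have := h a
    rw [smulCharpoly_congr eM, smulCharpoly_congr eN, smulCharpoly_prod,
      smulCharpoly_prod] at this
    exact mul_left_cancel₀ (smulCharpoly_monic a).ne_zero this
  have hlt : finrank K p' < d := by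
    have := (eM.restrictScalars K).finrank_eq
    have : 0 < finrank K p := Module.finrank_pos
    rw [Module.finrank_prod] at *
    omega
  obtain ⟨e'⟩ := ih _ hlt h' rfl
  exact ⟨eM ≪≫ₗ (LinearEquiv.refl A p).prodCongr e' ≪≫ₗ eN.symm⟩

end BrauerNesbitt

theorem Matrix.charpoly_eq_of_tendsto {ι R α : Type*} [Fintype ι] [DecidableEq ι] [CommRing R]
    [IsDomain R] [Infinite R] [TopologicalSpace R] [IsTopologicalRing R] [T2Space R]
    {l : Filter α} [l.NeBot] {B C : α → Matrix ι ι R} {B₀ C₀ : Matrix ι ι R}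
    (hB : Tendsto B l (𝓝 B₀)) (hC : Tendsto C l (𝓝 C₀))
    (h : ∀ k, (B k).charpoly = (C k).charpoly) : B₀.charpoly = C₀.charpoly := by
  refine Polynomial.funext fun t => ?_
  have hcont : Continuous fun M : Matrix ι ι R => M.charpoly.eval t := by
    simp only [eval_charpoly]
    exact (continuous_const.sub continuous_id).matrix_det
  exact tendsto_nhds_unique ((hcont.tendsto _).comp hB) <| by
    simpa only [Function.comp_def, h] using (hcont.tendsto _).comp hC

theorem MonoidAlgebra.tendsto_lift_apply {R G A α : Type*} [CommSemiring R] [Monoid G]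
    [Semiring A] [Algebra R A] [TopologicalSpace A] [ContinuousAdd A] [ContinuousConstSMul R A]
    {l : Filter α} {f : α → G →* A} {f₀ : G →* A}
    (h : ∀ g, Tendsto (fun k => f k g) l (𝓝 (f₀ g))) (a : R[G]) :
    Tendsto (fun k => lift R A G (f k) a) l (𝓝 (lift R A G f₀ a)) := by
  simp only [lift_apply, Finsupp.sum]
  exact tendsto_finsetSum _ fun g _ => (h g).const_smul _

namespace MonoidHom

variable {K Γ ι : Type*} [Group Γ] [Fintype ι] [DecidableEq ι]

section CommRing

variable [CommRing K]

def toRepresentation_s17 (ρ : Γ →* GL ι K) : Representation K Γ (ι → K) :=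
  (Units.coeHom _).comp (Matrix.GeneralLinearGroup.toLin.toMonoidHom.comp ρ)

noncomputable def toMatrixAlgHom (ρ : Γ →* GL ι K) : K[Γ] →ₐ[K] Matrix ι ι K :=
  MonoidAlgebra.lift K _ Γ ((Units.coeHom _).comp ρ)

theorem toLin'_toMatrixAlgHom (ρ : Γ →* GL ι K) (a : K[Γ]) :
    Matrix.toLin' (ρ.toMatrixAlgHom a) = ρ.toRepresentation_s17.asAlgebraHom a := by
  induction a using MonoidAlgebra.induction_linear with
  | zero => simp
  | add a b ha hb => simp [ha, hb]
  | single γ c => ext; simp [toMatrixAlgHom, toRepresentation_s17, Matrix.GeneralLinearGroup.toLin]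

theorem toMatrixAlgHom_conj (u : GL ι K) (ρ : Γ →* GL ι K) (a : K[Γ]) :
    ((MulAut.conj u).toMonoidHom.comp ρ).toMatrixAlgHom a = u * ρ.toMatrixAlgHom a * u⁻¹ := by
  induction a using MonoidAlgebra.induction_linear <;>
    simp_all [toMatrixAlgHom, mul_add, add_mul]

theorem charpoly_toMatrixAlgHom_conj (u : GL ι K) (ρ : Γ →* GL ι K) (a : K[Γ]) :
    (((MulAut.conj u).toMonoidHom.comp ρ).toMatrixAlgHom a).charpoly =
      (ρ.toMatrixAlgHom a).charpoly := by
  rw [toMatrixAlgHom_conj, Matrix.coe_units_inv, Matrix.charpoly_units_conj]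

theorem tendsto_toMatrixAlgHom [TopologicalSpace K] [IsTopologicalRing K] {α : Type*}
    {l : Filter α} {ρs : α → Γ →* GL ι K} {ρ : Γ →* GL ι K}
    (h : ∀ γ, Tendsto (fun k => (ρs k γ : Matrix ι ι K)) l (𝓝 (ρ γ))) (a : K[Γ]) :
    Tendsto (fun k => (ρs k).toMatrixAlgHom a) l (𝓝 (ρ.toMatrixAlgHom a)) :=
  MonoidAlgebra.tendsto_lift_apply h a

theorem exists_conj_of_linearEquiv {ρ ρ' : Γ →* GL ι K}
    (e : ρ.toRepresentation_s17.asModule ≃ₗ[K[Γ]] ρ'.toRepresentation_s17.asModule) :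
    ∃ h : GL ι K, ∀ γ, ρ' γ = h * ρ γ * h⁻¹ := by
  set σ := ρ.toRepresentation_s17
  set σ' := ρ'.toRepresentation_s17
  let E : (ι → K) ≃ₗ[K] (ι → K) :=
    σ.asModuleEquiv.symm ≪≫ₗ e.restrictScalars K ≪≫ₗ σ'.asModuleEquiv
  have hE (γ : Γ) (v : ι → K) : E (σ γ v) = σ' γ (E v) := by
    change σ'.asModuleEquiv (e (σ.asModuleEquiv.symm (σ γ v))) = _
    rw [Representation.asModuleEquiv_symm_map_rho, map_smul,
      Representation.asModuleEquiv_map_smul, Representation.asAlgebraHom_of]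
    rfl
  let h := Matrix.GeneralLinearGroup.toLin.symm
    ((LinearMap.GeneralLinearGroup.generalLinearEquiv K _).symm E)
  refine ⟨h, fun γ => ?_⟩
  have : ρ' γ * h = h * ρ γ := Matrix.GeneralLinearGroup.toLin.injective <|
    Units.ext <| LinearMap.ext fun v => by
      rw [map_mul, map_mul, MulEquiv.apply_symm_apply]
      exact (hE γ v).symm
  rw [← this, mul_inv_cancel_right]

end CommRing

section Field

variable [Field K]

theorem smulCharpoly_toRepresentation (ρ : Γ →* GL ι K) (a : K[Γ]) :
    smulCharpoly K a ρ.toRepresentation_s17.asModule = (ρ.toMatrixAlgHom a).charpoly := by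
  rw [← Matrix.charpoly_toLin', toLin'_toMatrixAlgHom, smulCharpoly,
    ← ρ.toRepresentation_s17.asModuleEquiv.charpoly_conj]
  rfl

theorem isSemisimpleModule_toRepresentation {n : ℕ} {ρ : Γ →* GL (Fin n) K}
    (hρ : IsSemisimpleRep ρ) : IsSemisimpleModule K[Γ] ρ.toRepresentation_s17.asModule := by
  rw [isSemisimpleModule_iff, ← ρ.toRepresentation_s17.mapSubmodule.complementedLattice_iff]
  refine ⟨fun ⟨p, hp⟩ => ?_⟩
  obtain ⟨q, hq, hpq⟩ := hρ p fun γ w hw => ρ.toRepresentation_s17.mem_invtSubmodule.mp hp γ hw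
  refine ⟨⟨q, ρ.toRepresentation_s17.mem_invtSubmodule.mpr fun γ w hw => hq γ w hw⟩, ?_, ?_⟩
  · exact disjoint_iff.mpr (Subtype.ext hpq.inf_eq_bot)
  · exact codisjoint_iff.mpr (Subtype.ext hpq.sup_eq_top)

end Field

end MonoidHom

theorem stmt17_general {K : Type*} [NontriviallyNormedField K]
    {Γ : Type*} [Group Γ] {n : ℕ}
    (ρ ρ' : Γ →* Matrix.GeneralLinearGroup (Fin n) K)
    (hρ : IsSemisimpleRep ρ) (hρ' : IsSemisimpleRep ρ')
    (ρseq : ℕ → (Γ →* Matrix.GeneralLinearGroup (Fin n) K))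
    (g : ℕ → Matrix.GeneralLinearGroup (Fin n) K)
    (hconv : ∀ γ : Γ,
      Tendsto (fun k : ℕ => ((ρseq k γ : Matrix (Fin n) (Fin n) K)))
        atTop (nhds ((ρ γ : Matrix (Fin n) (Fin n) K))))
    (hconv' : ∀ γ : Γ,
      Tendsto
        (fun k : ℕ =>
          ((g k * ρseq k γ * (g k)⁻¹ : Matrix.GeneralLinearGroup (Fin n) K) :
            Matrix (Fin n) (Fin n) K))
        atTop (nhds ((ρ' γ : Matrix (Fin n) (Fin n) K)))) :
    ∃ h : Matrix.GeneralLinearGroup (Fin n) K, ∀ γ : Γ, ρ' γ = h * ρ γ * h⁻¹ := by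
  have := MonoidHom.isSemisimpleModule_toRepresentation hρ
  have := MonoidHom.isSemisimpleModule_toRepresentation hρ'
  have hchar (a : K[Γ]) : smulCharpoly K a ρ.toRepresentation_s17.asModule =
      smulCharpoly K a ρ'.toRepresentation_s17.asModule := by
    rw [MonoidHom.smulCharpoly_toRepresentation, MonoidHom.smulCharpoly_toRepresentation]
    exact Matrix.charpoly_eq_of_tendsto (MonoidHom.tendsto_toMatrixAlgHom hconv a)
      (MonoidHom.tendsto_toMatrixAlgHom
        (ρs := fun k => (MulAut.conj (g k)).toMonoidHom.comp (ρseq k)) hconv' a)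
      fun k => (MonoidHom.charpoly_toMatrixAlgHom_conj (g k) (ρseq k) a).symm
  obtain ⟨e⟩ := nonempty_linearEquiv_of_smulCharpoly_eq hchar
  exact MonoidHom.exists_conj_of_linearEquiv e

/-- Over a local field, two semisimple representations of a finitely generated
group that are not separated by conjugation (there are homomorphisms `ρ_k → ρ` with
`g_k ρ_k g_k⁻¹ → ρ'`) are conjugate. -/
theorem stmt17 {K : Type*} [NontriviallyNormedField K] [ProperSpace K]
    {Γ : Type*} [Group Γ] [Group.FG Γ] {n : ℕ}
    (ρ ρ' : Γ →* Matrix.GeneralLinearGroup (Fin n) K)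
    (hρ : IsSemisimpleRep ρ) (hρ' : IsSemisimpleRep ρ')
    (ρseq : ℕ → (Γ →* Matrix.GeneralLinearGroup (Fin n) K))
    (g : ℕ → Matrix.GeneralLinearGroup (Fin n) K)
    (hconv : ∀ γ : Γ,
      Tendsto (fun k : ℕ => ((ρseq k γ : Matrix (Fin n) (Fin n) K)))
        atTop (nhds ((ρ γ : Matrix (Fin n) (Fin n) K))))
    (hconv' : ∀ γ : Γ,
      Tendsto
        (fun k : ℕ =>
          ((g k * ρseq k γ * (g k)⁻¹ : Matrix.GeneralLinearGroup (Fin n) K) :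
            Matrix (Fin n) (Fin n) K))
        atTop (nhds ((ρ' γ : Matrix (Fin n) (Fin n) K)))) :
    ∃ h : Matrix.GeneralLinearGroup (Fin n) K, ∀ γ : Γ, ρ' γ = h * ρ γ * h⁻¹ :=
  stmt17_general ρ ρ' hρ hρ' ρseq g hconv hconv'
end
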